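/- arXiv:2303.07734 — 3 statements merged into one kernel-verified Lean document; each statement's English description precedes it below -/
import Mathlib

section
/- Let A be a commutative 𝔽_p-algebra and E ⊆ A an 𝔽_p-linear subspace of dimension r. Then ∑_{u∈E} u^{pʳ-1} = ∏_{u ∈ E\{0\}} u. -/
open scoped Classical

section AuxiliaryLemmas

open Finset Polynomial

universe u

variable {p : ℕ} [Fact p.Prime]

lemma zmod_prod_X_sub_C : ∏ a : ZMod p, (X - C a : (ZMod p)[X]) = X ^ p - X := by
  have hp1 : 1 < p := (Fact.out : p.Prime).one_lt
  have hq : Fintype.card (ZMod p) = p := ZMod.card p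
  have hroots := FiniteField.roots_X_pow_card_sub_X (ZMod p)
  rw [hq] at hroots
  have hmonic : (X ^ p - X : (ZMod p)[X]).Monic := by
    apply Polynomial.monic_X_pow_sub
    rw [Polynomial.degree_X]
    exact_mod_cast hp1
  have hdeg := FiniteField.X_pow_card_sub_X_natDegree_eq (ZMod p) hp1
  have hcard : Multiset.card (X ^ p - X : (ZMod p)[X]).roots
      = (X ^ p - X : (ZMod p)[X]).natDegree := by
    rw [hroots, hdeg]; simpa using hq
  have h2 := Polynomial.C_leadingCoeff_mul_prod_multiset_X_sub_C hcard
  rw [hmonic.leadingCoeff, map_one, one_mul, hroots] at h2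
  rw [← h2]
  rfl

lemma wilson_prod : ∏ c ∈ univ.filter (fun c : ZMod p => c ≠ 0), c = (-1 : ZMod p) := by
  have h := FiniteField.prod_univ_units_id_eq_neg_one (K := ZMod p)
  have h2 : ((∏ x : (ZMod p)ˣ, x : (ZMod p)ˣ) : ZMod p) = ((-1 : (ZMod p)ˣ) : ZMod p) := by
    rw [h]
  rw [← Units.coeHom_apply, map_prod] at h2
  simp only [Units.coeHom_apply, Units.val_neg, Units.val_one] at h2
  rw [← h2]
  refine (Finset.prod_nbij (fun u : (ZMod p)ˣ => (u : ZMod p)) ?_ ?_ ?_ ?_).symm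
  · intro u _; simp [Units.ne_zero]
  · intro u _ v _ huv; exact Units.ext huv
  · intro c hc
    simp only [mem_coe, mem_filter, mem_univ, true_and] at hc
    exact ⟨(Ne.isUnit hc).unit, by simp, rfl⟩
  · intro u _; rfl
-- assume zmod_prod_X_sub_C proved
lemma prod_lin_sub {B : Type*} [CommRing B] (χ : ZMod p →+* B) (w : B) :
    ∏ a : ZMod p, (w - χ a) = w ^ p - w := by
  have h := congrArg (fun q : (ZMod p)[X] => Polynomial.eval w (q.map χ)) (zmod_prod_X_sub_C (p := p))
  simpa [Polynomial.eval_prod, Polynomial.map_prod] using h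

lemma prod1 {B : Type*} [CommRing B] (χ : ZMod p →+* B) (b z : B) (hb : IsUnit b ∨ b = 0) :
    ∏ a : ZMod p, (z + χ a * b) = z ^ p - b ^ (p - 1) * z := by
  have hp1 : 1 < p := (Fact.out : p.Prime).one_lt
  rcases hb with ⟨u, rfl⟩ | rfl
  · -- unit case
    have key : ∀ a : ZMod p, z + χ a * (u : B) = (u : B) * (((u⁻¹ : Bˣ) : B) * z + χ a) := by
      intro a
      rw [mul_add, ← mul_assoc, Units.mul_inv, one_mul]; ring
    calc ∏ a : ZMod p, (z + χ a * (u : B))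
        = ∏ a : ZMod p, ((u : B) * (((u⁻¹ : Bˣ) : B) * z + χ a)) := by
          exact Finset.prod_congr rfl fun a _ => key a
      _ = (u : B) ^ p * ∏ a : ZMod p, (((u⁻¹ : Bˣ) : B) * z + χ a) := by
          rw [Finset.prod_mul_distrib, Finset.prod_const, Finset.card_univ, ZMod.card]
      _ = (u : B) ^ p * ∏ a : ZMod p, (((u⁻¹ : Bˣ) : B) * z - χ a) := by
          congr 1
          exact Fintype.prod_equiv (Equiv.neg (ZMod p)) _ _ (fun a => by
            simp [sub_eq_add_neg])
      _ = (u : B) ^ p * ((((u⁻¹ : Bˣ) : B) * z) ^ p - ((u⁻¹ : Bˣ) : B) * z) := by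
          rw [prod_lin_sub]
      _ = z ^ p - (u : B) ^ (p - 1) * z := by
          rw [mul_pow, mul_sub]
          congr 1
          · rw [← mul_assoc, ← mul_pow, Units.mul_inv, one_pow, one_mul]
          · rw [← mul_assoc]
            congr 1
            have : (u : B) ^ p = (u : B) ^ (p - 1) * (u : B) := by
              conv_lhs => rw [show p = (p - 1) + 1 by omega]
              rw [pow_succ]
            rw [this, mul_assoc, Units.mul_inv, mul_one]
  · simp only [mul_zero, add_zero]
    rw [Finset.prod_const, Finset.card_univ, ZMod.card, zero_pow (by omega : p - 1 ≠ 0),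
      zero_mul, sub_zero]
/-- linear combination -/
def lc (p : ℕ) {B : Type*} [CommRing B] [Algebra (ZMod p) B] {r : ℕ} (e : Fin r → B)
    (c : Fin r → ZMod p) : B :=
  ∑ i, algebraMap (ZMod p) B (c i) * e i

lemma lc_zero {B : Type*} [CommRing B] [Algebra (ZMod p) B] {r : ℕ} (e : Fin r → B) :
    lc p e 0 = 0 := by simp [lc]

lemma lc_add {B : Type*} [CommRing B] [Algebra (ZMod p) B] {r : ℕ} (e : Fin r → B)
    (c d : Fin r → ZMod p) : lc p e (c + d) = lc p e c + lc p e d := by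
  simp [lc, add_mul, Finset.sum_add_distrib]

lemma lc_neg {B : Type*} [CommRing B] [Algebra (ZMod p) B] {r : ℕ} (e : Fin r → B)
    (c : Fin r → ZMod p) : lc p e (-c) = - lc p e c := by
  simp [lc, Finset.sum_neg_distrib]

lemma lc_cons {B : Type*} [CommRing B] [Algebra (ZMod p) B] {r : ℕ} (e : Fin (r+1) → B)
    (a0 : ZMod p) (c : Fin r → ZMod p) :
    lc p e (Fin.cons a0 c) = algebraMap (ZMod p) B a0 * e 0 + lc p (fun i => e i.succ) c := by
  simp [lc, Fin.sum_univ_succ]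

lemma zmod_pow_pow (a : ZMod p) (i : ℕ) : a ^ (p ^ i) = a := by
  induction i with
  | zero => simp
  | succ n ih => rw [pow_succ, pow_mul, ih, ZMod.pow_card]

lemma card_filter_ne_zero : ((univ : Finset (ZMod p)).filter (fun c => c ≠ 0)).card = p - 1 := by
  rw [Finset.filter_ne', Finset.card_erase_of_mem (Finset.mem_univ _), Finset.card_univ, ZMod.card]
-- (-1)^(p^r) = -1  and (-1)^(p^r - 1) = 1 in char p
lemma neg_one_pow_q_sub_one {K : Type*} [CommRing K] [CharP K p] (r : ℕ) :
    ((-1 : K)) ^ (p ^ r - 1) = 1 := by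
  rcases (Fact.out : p.Prime).eq_two_or_odd' with h2 | hodd
  · subst h2
    haveI : CharP K 2 := by assumption
    rw [CharTwo.neg_eq, one_pow]
  · exact Even.neg_one_pow (Nat.Odd.sub_odd (hodd.pow) odd_one)

lemma derivative_prod_linear {R : Type*} [CommRing R] {ι : Type*} [Fintype ι] [DecidableEq ι]
    (u : ι → R) :
    derivative (∏ c : ι, (X - C (u c))) = ∑ c : ι, ∏ d ∈ univ.erase c, (X - C (u d)) := by
  rw [Finset.prod_eq_multiset_prod, Polynomial.derivative_prod]
  rw [Finset.sum_eq_multiset_sum]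
  congr 1
  refine Multiset.map_congr rfl fun c _ => ?_
  rw [derivative_sub, derivative_X, derivative_C, sub_zero, mul_one, ← Finset.erase_val,
    ← Finset.prod_eq_multiset_prod]

lemma prod_neg' {R : Type*} [CommRing R] {ι : Type*} (s : Finset ι) (u : ι → R) :
    ∏ d ∈ s, (-(u d)) = (-1 : R) ^ s.card * ∏ d ∈ s, u d := by
  rw [← Finset.prod_const, ← Finset.prod_mul_distrib]
  exact Finset.prod_congr rfl fun d _ => by ring

lemma coset_sum {K : Type u} [Field K] [Algebra (ZMod p) K] {r i : ℕ} (hir : i < r)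
    (e : Fin r → K) (hinj : ∀ c, lc p e c = 0 → c = 0)
    (G : ∀ e1 : Fin i → K, (∀ c, lc p e1 c = 0 → c = 0) → ∀ w : K,
      ∑ c : Fin i → ZMod p, (w + lc p e1 c) ^ (p ^ i - 1)
        = ∏ c ∈ univ.filter (fun c : Fin i → ZMod p => c ≠ 0), lc p e1 c)
    (w : K) :
    ∑ c : Fin r → ZMod p, (w + lc p e c) ^ (p ^ i - 1) = 0 := by
  haveI : CharP K p := charP_of_injective_algebraMap (algebraMap (ZMod p) K).injective p
  set j := r - i with hjdef
  have hij : i + j = r := by omega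
  have hjpos : 0 < j := by omega
  set σ : (Fin i ⊕ Fin j) ≃ Fin r := finSumFinEquiv.trans (finCongr hij) with hσ
  set Φ : ((Fin i → ZMod p) × (Fin j → ZMod p)) ≃ (Fin r → ZMod p) :=
    (Equiv.sumArrowEquivProdArrow (Fin i) (Fin j) (ZMod p)).symm.trans
      (Equiv.arrowCongr σ (Equiv.refl (ZMod p))) with hΦdef
  set e1 : Fin i → K := fun k => e (σ (Sum.inl k)) with he1
  set e2 : Fin j → K := fun k => e (σ (Sum.inr k)) with he2
  have hΦ : ∀ (c1 : Fin i → ZMod p) (c2 : Fin j → ZMod p) (s : Fin i ⊕ Fin j),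
      Φ (c1, c2) (σ s) = Sum.elim c1 c2 s := by
    intro c1 c2 s
    simp [hΦdef, Equiv.sumArrowEquivProdArrow, Equiv.arrowCongr]
  have hlc : ∀ c1 c2, lc p e (Φ (c1, c2)) = lc p e1 c1 + lc p e2 c2 := by
    intro c1 c2
    rw [lc, ← Equiv.sum_comp σ (fun x => algebraMap (ZMod p) K (Φ (c1, c2) x) * e x),
      Fintype.sum_sum_type]
    congr 1
    · refine Finset.sum_congr rfl fun k _ => ?_
      rw [hΦ]
      rfl
    · refine Finset.sum_congr rfl fun k _ => ?_
      rw [hΦ]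
      rfl
  have hinj1 : ∀ c1, lc p e1 c1 = 0 → c1 = 0 := by
    intro c1 h
    have h0 : lc p e (Φ (c1, 0)) = 0 := by
      rw [hlc, h, zero_add]
      have : lc p e2 (0 : Fin j → ZMod p) = 0 := by simp [lc]
      rw [this]
    have hc := hinj _ h0
    funext k
    have h2 := congrFun hc (σ (Sum.inl k))
    rw [hΦ] at h2
    exact h2
  calc ∑ c : Fin r → ZMod p, (w + lc p e c) ^ (p ^ i - 1)
      = ∑ x : (Fin i → ZMod p) × (Fin j → ZMod p), (w + lc p e (Φ x)) ^ (p ^ i - 1) :=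
        (Fintype.sum_equiv Φ _ _ fun x => rfl).symm
    _ = ∑ c2 : Fin j → ZMod p, ∑ c1 : Fin i → ZMod p,
          ((w + lc p e2 c2) + lc p e1 c1) ^ (p ^ i - 1) := by
        rw [Fintype.sum_prod_type_right]
        refine Finset.sum_congr rfl fun c2 _ => Finset.sum_congr rfl fun c1 _ => ?_
        rw [hlc]
        congr 1
        ring
    _ = ∑ _c2 : Fin j → ZMod p,
          ∏ c1 ∈ univ.filter (fun c1 : Fin i → ZMod p => c1 ≠ 0), lc p e1 c1 :=
        Finset.sum_congr rfl fun c2 _ => G e1 hinj1 _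
    _ = 0 := by
        rw [Finset.sum_const, nsmul_eq_mul]
        have hcard : ((Fintype.card (Fin j → ZMod p) : ℕ) : K) = 0 := by
          rw [Fintype.card_fun, ZMod.card, Fintype.card_fin, Nat.cast_pow, CharP.cast_eq_zero,
            zero_pow hjpos.ne']
        rw [Finset.card_univ, hcard, zero_mul]
lemma moore {K : Type u} [Field K] [Algebra (ZMod p) K] {r : ℕ} (e : Fin r → K) :
    ∃ a : ℕ → K, a r = 1 ∧ (∀ j, r < j → a j = 0) ∧
      a 0 = ∏ c ∈ univ.filter (fun c : Fin r → ZMod p => c ≠ 0), lc p e c ∧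
      ∀ (B : Type u) [CommRing B] [Algebra K B] [CharP B p] (y : B),
        ∏ c : Fin r → ZMod p, (y + algebraMap K B (lc p e c)) =
          ∑ i ∈ range (r+1), algebraMap K B (a i) * y ^ (p ^ i) := by
  haveI : CharP K p := charP_of_injective_algebraMap (algebraMap (ZMod p) K).injective p
  induction r with
  | zero =>
    refine ⟨fun i => if i = 0 then 1 else 0, by simp, fun j hj => if_neg (by omega),
      ?_, ?_⟩
    · have hemp : (univ.filter (fun c : Fin 0 → ZMod p => c ≠ 0)) = ∅ := by
        ext c; simp [Subsingleton.elim c 0]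
      rw [hemp]; simp
    · intro B _ _ _ y
      have h1 : ∀ c : Fin 0 → ZMod p, lc p e c = 0 := by intro c; simp [lc]
      simp [h1]
  | succ r IH =>
    obtain ⟨a', ha'r, ha'top, ha'0, hP'⟩ := IH (fun i => e i.succ)
    set e0 := e 0 with he0
    set b : K := ∑ i ∈ range (r+1), a' i * e0 ^ (p ^ i) with hb_def
    have hbu : IsUnit b ∨ b = 0 := by
      rcases eq_or_ne b 0 with h | h
      · exact Or.inr h
      · exact Or.inl (Ne.isUnit h)
    -- key evaluation
    have key : ∀ (B : Type u) [CommRing B] [Algebra K B] [CharP B p] (y : B) (a0 : ZMod p),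
        ∏ c : Fin r → ZMod p,
            (y + algebraMap K B (algebraMap (ZMod p) K a0 * e0)
              + algebraMap K B (lc p (fun i => e i.succ) c))
          = (∑ i ∈ range (r+1), algebraMap K B (a' i) * y ^ (p ^ i))
            + algebraMap K B (algebraMap (ZMod p) K a0 * b) := by
      intro B _ _ _ y a0
      rw [hP' B (y + algebraMap K B (algebraMap (ZMod p) K a0 * e0))]
      have ht : ∀ i : ℕ, (algebraMap K B (algebraMap (ZMod p) K a0 * e0)) ^ (p ^ i)
          = algebraMap K B (algebraMap (ZMod p) K a0 * e0 ^ (p ^ i)) := by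
        intro i
        rw [← map_pow, mul_pow, ← map_pow (algebraMap (ZMod p) K), zmod_pow_pow]
      have expand : ∀ i ∈ range (r+1),
          algebraMap K B (a' i) * (y + algebraMap K B (algebraMap (ZMod p) K a0 * e0)) ^ (p ^ i)
          = algebraMap K B (a' i) * y ^ (p ^ i)
            + algebraMap K B (algebraMap (ZMod p) K a0 * (a' i * e0 ^ (p ^ i))) := by
        intro i _
        rw [add_pow_char_pow, ht i, mul_add, ← map_mul]
        ring_nf
      rw [Finset.sum_congr rfl expand, Finset.sum_add_distrib]
      congr 1
      rw [← map_sum, ← Finset.mul_sum]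
    refine ⟨fun i => (if i = 0 then (0:K) else a' (i-1) ^ p) - b ^ (p-1) * a' i, ?_, ?_, ?_, ?_⟩
    · show (if r + 1 = 0 then (0:K) else a' (r+1-1) ^ p) - b ^ (p - 1) * a' (r + 1) = 1
      rw [if_neg (by omega), ha'top (r+1) (by omega), Nat.add_sub_cancel, ha'r]
      simp
    · intro j hj
      show (if j = 0 then (0:K) else a' (j-1) ^ p) - b ^ (p - 1) * a' j = 0
      rw [if_neg (by omega), ha'top j (by omega), ha'top (j-1) (by omega), mul_zero, sub_zero,
        zero_pow (by have := (Fact.out : p.Prime).pos; omega)]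
    · -- a 0 = product over nonzero c
      show (if (0:ℕ) = 0 then (0:K) else a' (0-1) ^ p) - b ^ (p - 1) * a' 0
        = ∏ c ∈ univ.filter (fun c : Fin (r+1) → ZMod p => c ≠ 0), lc p e c
      rw [if_pos rfl, zero_sub]
      -- reindex product over nonzero tuples via cons
      have stepA : ∏ c ∈ univ.filter (fun c : Fin (r+1) → ZMod p => c ≠ 0), lc p e c
          = ∏ x ∈ univ.filter (fun x : ZMod p × (Fin r → ZMod p) => x ≠ 0),
              lc p e (Fin.cons x.1 x.2) := by
        refine Finset.prod_nbij' (fun c => (c 0, Fin.tail c)) (fun x => Fin.cons x.1 x.2)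
          ?_ ?_ ?_ ?_ ?_
        · intro c hc
          simp only [mem_filter, mem_univ, true_and] at hc ⊢
          intro h
          apply hc
          have h1 : c 0 = 0 ∧ Fin.tail c = 0 := by
            constructor
            · exact congrArg Prod.fst h
            · exact congrArg Prod.snd h
          funext i
          rcases Fin.cases (motive := fun i => c i = 0) h1.1 (fun j => congrFun h1.2 j) i with h
          exact h
        · intro x hx
          simp only [mem_filter, mem_univ, true_and] at hx ⊢
          intro h
          apply hx
          have h0 : x.1 = 0 := by
            have := congrFun h 0
            simpa using this
          have h2 : x.2 = 0 := by
            funext j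
            have := congrFun h j.succ
            simpa using this
          exact Prod.ext h0 h2
        · intro c hc
          simp [Fin.cons_self_tail]
        · intro x hx
          simp [Fin.tail_cons]
        · intro c hc
          rw [Fin.cons_self_tail]
      rw [stepA]
      have hsplit : (univ.filter (fun x : ZMod p × (Fin r → ZMod p) => x ≠ 0))
          = (({(0 : ZMod p)} : Finset (ZMod p)) ×ˢ univ.filter (fun c' : Fin r → ZMod p => c' ≠ 0))
            ∪ ((univ.filter (fun a0 : ZMod p => a0 ≠ 0)) ×ˢ (univ : Finset (Fin r → ZMod p))) := by
        ext x
        by_cases h : x.1 = 0 <;>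
          simp [Finset.mem_product, h, Prod.ext_iff]
      have hdisj : Disjoint
          (({(0 : ZMod p)} : Finset (ZMod p)) ×ˢ univ.filter (fun c' : Fin r → ZMod p => c' ≠ 0))
          ((univ.filter (fun a0 : ZMod p => a0 ≠ 0)) ×ˢ (univ : Finset (Fin r → ZMod p))) := by
        rw [Finset.disjoint_left]
        intro x hx hx'
        simp only [Finset.mem_product, Finset.mem_singleton, mem_filter] at hx hx'
        exact hx'.1.2 hx.1
      rw [hsplit, Finset.prod_union hdisj, Finset.prod_product, Finset.prod_product,
        Finset.prod_singleton]
      -- first factor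
      have hfst : ∏ c' ∈ univ.filter (fun c' : Fin r → ZMod p => c' ≠ 0),
          lc p e (Fin.cons 0 c') = a' 0 := by
        rw [ha'0]
        refine Finset.prod_congr rfl fun c' _ => ?_
        rw [lc_cons]
        simp
      rw [hfst]
      -- second factor
      have hinner : ∀ a0 : ZMod p, ∏ c' : Fin r → ZMod p, lc p e (Fin.cons a0 c')
          = algebraMap (ZMod p) K a0 * b := by
        intro a0
        have h1 := key K 0 a0
        simp only [Algebra.algebraMap_self, RingHom.id_apply, zero_add] at h1
        have h2 : ∀ i ∈ range (r+1), a' i * (0:K) ^ (p ^ i) = 0 := by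
          intro i _
          rw [zero_pow (pow_ne_zero _ (Fact.out : p.Prime).pos.ne'), mul_zero]
        rw [Finset.sum_congr rfl h2, Finset.sum_const, smul_zero, zero_add] at h1
        rw [← h1]
        refine Finset.prod_congr rfl fun c' _ => ?_
        rw [lc_cons]
      have hsnd : ∏ a0 ∈ univ.filter (fun a0 : ZMod p => a0 ≠ 0),
          ∏ c' : Fin r → ZMod p, lc p e (Fin.cons a0 c') = - b ^ (p-1) := by
        calc ∏ a0 ∈ univ.filter (fun a0 : ZMod p => a0 ≠ 0),
              ∏ c' : Fin r → ZMod p, lc p e (Fin.cons a0 c')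
            = ∏ a0 ∈ univ.filter (fun a0 : ZMod p => a0 ≠ 0),
              (algebraMap (ZMod p) K a0 * b) := Finset.prod_congr rfl fun a0 _ => hinner a0
          _ = (∏ a0 ∈ univ.filter (fun a0 : ZMod p => a0 ≠ 0), algebraMap (ZMod p) K a0)
              * b ^ (p - 1) := by
              rw [Finset.prod_mul_distrib, Finset.prod_const, card_filter_ne_zero]
          _ = - b ^ (p-1) := by
              rw [← map_prod, wilson_prod]
              simp
      rw [hsnd, ha'0]
      ring
    · -- the polynomial identity
      intro B _ _ _ y
      beta_reduce
      have step1 : ∏ c : Fin (r+1) → ZMod p, (y + algebraMap K B (lc p e c)) =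
          ∏ x : ZMod p × (Fin r → ZMod p), (y + algebraMap K B (lc p e (Fin.cons x.1 x.2))) := by
        refine Fintype.prod_equiv ((Fin.consEquiv (fun _ : Fin (r+1) => ZMod p)).symm) _ _ ?_
        intro c
        simp only [Fin.consEquiv, Equiv.coe_fn_symm_mk]
        rw [Fin.cons_self_tail]
      rw [step1, Fintype.prod_prod_type]
      have step2 : ∀ x1 : ZMod p,
          ∏ x2 : Fin r → ZMod p, (y + algebraMap K B (lc p e (Fin.cons x1 x2)))
          = (∑ i ∈ range (r+1), algebraMap K B (a' i) * y ^ (p ^ i))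
            + ((algebraMap K B).comp (algebraMap (ZMod p) K)) x1 * algebraMap K B b := by
        intro x1
        calc ∏ x2 : Fin r → ZMod p, (y + algebraMap K B (lc p e (Fin.cons x1 x2)))
            = ∏ c' : Fin r → ZMod p,
                (y + algebraMap K B (algebraMap (ZMod p) K x1 * e0)
                  + algebraMap K B (lc p (fun i => e i.succ) c')) := by
              refine Finset.prod_congr rfl fun c' _ => ?_
              rw [lc_cons, map_add, add_assoc]
          _ = (∑ i ∈ range (r+1), algebraMap K B (a' i) * y ^ (p ^ i))
              + algebraMap K B (algebraMap (ZMod p) K x1 * b) := key B y x1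
          _ = _ := by rw [map_mul]; rfl
      rw [Finset.prod_congr rfl (fun x1 _ => step2 x1)]
      rw [prod1 ((algebraMap K B).comp (algebraMap (ZMod p) K)) (algebraMap K B b) _
        (hbu.imp (IsUnit.map _) (fun h => by rw [h, map_zero]))]
      set L : B := ∑ i ∈ range (r+1), algebraMap K B (a' i) * y ^ (p ^ i) with hL
      have hLp : L ^ p = ∑ i ∈ range (r+1), algebraMap K B (a' i ^ p) * y ^ (p ^ (i+1)) := by
        rw [hL, sum_pow_char]
        refine Finset.sum_congr rfl fun i _ => ?_
        rw [mul_pow, ← map_pow, ← pow_mul, ← pow_succ]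
      rw [hLp]
      have hsplitsum : ∑ i ∈ range (r+2),
          algebraMap K B ((if i = 0 then (0:K) else a' (i-1) ^ p) - b ^ (p-1) * a' i) * y ^ (p ^ i)
          = (∑ i ∈ range (r+2), algebraMap K B (if i = 0 then (0:K) else a' (i-1) ^ p) * y ^ (p ^ i))
            - ∑ i ∈ range (r+2), algebraMap K B (b ^ (p-1) * a' i) * y ^ (p ^ i) := by
        rw [← Finset.sum_sub_distrib]
        refine Finset.sum_congr rfl fun i _ => ?_
        rw [map_sub, sub_mul]
      rw [show r + 1 + 1 = r + 2 from rfl, hsplitsum]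
      congr 1
      · conv_rhs => rw [Finset.sum_range_succ']
        simp [Nat.add_sub_cancel]
      · rw [Finset.sum_range_succ, ha'top (r+1) (by omega), mul_zero, map_zero, zero_mul, add_zero,
          hL, Finset.mul_sum]
        refine Finset.sum_congr rfl fun i _ => ?_
        rw [map_mul, map_pow]
        ring
lemma main_field {K : Type u} [Field K] [Algebra (ZMod p) K] :
    ∀ r : ℕ, ∀ e : Fin r → K, (∀ c, lc p e c = 0 → c = 0) → ∀ w : K,
      ∑ c : Fin r → ZMod p, (w + lc p e c) ^ (p ^ r - 1)
        = ∏ c ∈ univ.filter (fun c : Fin r → ZMod p => c ≠ 0), lc p e c := by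
  haveI hKp : CharP K p := charP_of_injective_algebraMap (algebraMap (ZMod p) K).injective p
  haveI hKXp : CharP K[X] p := charP_of_injective_ringHom (@Polynomial.C_injective K _) p
  have hppos := (Fact.out : p.Prime).pos
  intro r
  induction r using Nat.strong_induction_on with
  | _ r IH =>
  intro e hinj w
  rcases Nat.eq_zero_or_pos r with rfl | hrpos
  · have hemp : (univ.filter (fun c : Fin 0 → ZMod p => c ≠ 0)) = ∅ := by
      ext c; simp [Subsingleton.elim c 0]
    rw [hemp, Finset.prod_empty]
    simp
  -- r ≥ 1
  have hq1 : 1 ≤ p ^ r := Nat.one_le_pow _ _ hppos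
  have hq2 : 2 ≤ p ^ r := by
    calc 2 ≤ p := (Fact.out : p.Prime).two_le
    _ = p ^ 1 := (pow_one p).symm
    _ ≤ p ^ r := Nat.pow_le_pow_right hppos hrpos
  have hcard : (univ : Finset (Fin r → ZMod p)).card = p ^ r := by
    rw [Finset.card_univ, Fintype.card_fun, ZMod.card, Fintype.card_fin]
  obtain ⟨a, har, hatop, ha0, hP⟩ := moore (p := p) (K := K) e
  -- the polynomial identity
  have hWpoly : ∀ w : K, ∏ c : Fin r → ZMod p, (X - C (w - lc p e c))
      = ∑ i ∈ range (r+1), C (a i) * X ^ (p ^ i)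
        - C (∑ i ∈ range (r+1), a i * w ^ (p ^ i)) := by
    intro w
    have h1 := hP K[X] (X - C w)
    have h2 : ∀ c : Fin r → ZMod p,
        X - C w + algebraMap K K[X] (lc p e c) = X - C (w - lc p e c) := by
      intro c
      rw [Polynomial.algebraMap_eq, map_sub]
      ring
    rw [Finset.prod_congr rfl (fun c _ => h2 c)] at h1
    rw [h1]
    have h3 : ∀ i ∈ range (r+1), algebraMap K K[X] (a i) * (X - C w) ^ (p ^ i)
        = C (a i) * X ^ (p ^ i) - C (a i * w ^ (p ^ i)) := by
      intro i _
      rw [Polynomial.algebraMap_eq, sub_pow_char_pow, mul_sub, ← C_pow, ← C_mul]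
    rw [Finset.sum_congr rfl h3, Finset.sum_sub_distrib, ← map_sum]
  have hF1 : ∀ (w : K) (c0 : Fin r → ZMod p),
      ∑ i ∈ range (r+1), a i * (w - lc p e c0) ^ (p ^ i)
        = ∑ i ∈ range (r+1), a i * w ^ (p ^ i) := by
    intro w c0
    have h1 := congrArg (Polynomial.eval (w - lc p e c0)) (hWpoly w)
    rw [Polynomial.eval_prod] at h1
    have h2 : ∏ c : Fin r → ZMod p,
        Polynomial.eval (w - lc p e c0) (X - C (w - lc p e c)) = 0 :=
      Finset.prod_eq_zero (mem_univ c0) (by simp)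
    rw [h2] at h1
    simp only [eval_sub, eval_finset_sum, eval_mul, eval_C, eval_pow, eval_X] at h1
    exact (sub_eq_zero.mp h1.symm)
  have hβ0 : ∑ i ∈ range (r+1), a i * (0:K) ^ (p ^ i) = 0 := by
    refine Finset.sum_eq_zero fun i _ => ?_
    rw [zero_pow (Nat.pow_pos hppos).ne', mul_zero]
  have hF2 : ∀ w : K, ∏ c : Fin r → ZMod p, (w - lc p e c)
      = ∑ i ∈ range (r+1), a i * w ^ (p ^ i) := by
    intro w
    have h1 := congrArg (Polynomial.eval 0) (hWpoly w)
    rw [Polynomial.eval_prod] at h1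
    simp only [eval_sub, eval_X, eval_C, zero_sub, eval_finset_sum, eval_mul, eval_pow] at h1
    rw [prod_neg', hcard, neg_one_pow_char_pow] at h1
    rw [hβ0, zero_sub] at h1
    have h3 : ∀ i ∈ range (r+1), a i * (0:K) ^ (p ^ i) = 0 := fun i _ => by
      rw [zero_pow (Nat.pow_pos hppos).ne', mul_zero]
    rw [neg_one_mul] at h1
    exact neg_injective h1
  have hF3 : ∀ w : K, ∑ c : Fin r → ZMod p, ∏ d ∈ univ.erase c, (w - lc p e d) = a 0 := by
    intro w
    have h1 := congrArg (Polynomial.eval 0) (congrArg derivative (hWpoly w))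
    rw [derivative_prod_linear] at h1
    have hder : derivative (∑ i ∈ range (r+1), C (a i) * X ^ (p ^ i)
        - C (∑ i ∈ range (r+1), a i * w ^ (p ^ i))) = C (a 0) := by
      rw [derivative_sub, derivative_C, sub_zero, derivative_sum]
      have hterm : ∀ i ∈ range (r+1), derivative (C (a i) * X ^ (p ^ i))
          = if i = 0 then C (a 0) else 0 := by
        intro i _
        rw [derivative_C_mul, derivative_X_pow]
        rcases Nat.eq_zero_or_pos i with rfl | hi
        · simp
        · rw [if_neg hi.ne']
          simp only [Nat.cast_pow, CharP.cast_eq_zero, zero_pow hi.ne', map_zero, zero_mul,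
            mul_zero]
      rw [Finset.sum_congr rfl hterm, Finset.sum_range_succ']
      have : ∀ i ∈ range r, (if i + 1 = 0 then C (a 0) else 0) = (0 : K[X]) :=
        fun i _ => if_neg (Nat.succ_ne_zero i)
      rw [Finset.sum_congr rfl this, Finset.sum_const, smul_zero, zero_add, if_pos rfl]
    rw [hder, eval_C] at h1
    rw [eval_finset_sum] at h1
    have h4 : ∀ c ∈ (univ : Finset (Fin r → ZMod p)),
        Polynomial.eval 0 (∏ d ∈ univ.erase c, (X - C (w - lc p e d)))
          = ∏ d ∈ univ.erase c, (w - lc p e d) := by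
      intro c _
      rw [eval_prod]
      have h5 : ∀ d ∈ univ.erase c, Polynomial.eval 0 (X - C (w - lc p e d))
          = -(w - lc p e d) := fun d _ => by simp
      rw [Finset.prod_congr rfl h5, prod_neg', Finset.card_erase_of_mem (mem_univ c), hcard,
        neg_one_pow_q_sub_one, one_mul]
    rw [Finset.sum_congr rfl h4] at h1
    exact h1
  have hdiv : ∀ (w : K) (c0 : Fin r → ZMod p), (w - lc p e c0) ≠ 0 →
      (w - lc p e c0) ^ (p ^ r - 1)
        = (∑ i ∈ range (r+1), a i * w ^ (p ^ i)) / (w - lc p e c0)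
          - ∑ i ∈ range r, a i * (w - lc p e c0) ^ (p ^ i - 1) := by
    intro w c0 hu
    have h1 := hF1 w c0
    rw [Finset.sum_range_succ, har, one_mul] at h1
    have h2 : (w - lc p e c0) ^ (p ^ r)
        = (∑ i ∈ range (r+1), a i * w ^ (p ^ i))
          - ∑ i ∈ range r, a i * (w - lc p e c0) ^ (p ^ i) :=
      eq_sub_of_add_eq' h1
    have hpow : ∀ n : ℕ, 1 ≤ n → (w - lc p e c0) ^ (n - 1) = (w - lc p e c0) ^ n / (w - lc p e c0) := by
      intro n hn
      rw [eq_div_iff hu, ← pow_succ, Nat.sub_add_cancel hn]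
    rw [hpow _ hq1, h2, sub_div]
    congr 1
    rw [Finset.sum_div]
    refine Finset.sum_congr rfl fun i _ => ?_
    rw [mul_div_assoc, hpow _ (Nat.one_le_pow _ _ hppos)]
  -- sums of smaller powers vanish (for every w)
  have hvanish : ∀ (w : K) (i : ℕ), 0 < i → i < r →
      ∑ c : Fin r → ZMod p, (w - lc p e c) ^ (p ^ i - 1) = 0 := by
    intro w i hipos hir
    have hcos := coset_sum hir e hinj (fun e1 h1 w1 => IH i hir e1 h1 w1) w
    rw [← hcos]
    refine Fintype.sum_equiv (Equiv.neg _) _ _ fun c => ?_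
    simp only [Equiv.neg_apply, lc_neg, sub_eq_add_neg]
  have hqpow2 : ∀ i : ℕ, 0 < i → 2 ≤ p ^ i := by
    intro i hi
    calc 2 ≤ p := (Fact.out : p.Prime).two_le
    _ = p ^ 1 := (pow_one p).symm
    _ ≤ p ^ i := Nat.pow_le_pow_right hppos hi
  -- filtered sums of smaller powers vanish at w = 0
  have hT : ∀ i : ℕ, 0 < i → i < r →
      ∑ c ∈ univ.filter (fun c : Fin r → ZMod p => c ≠ 0), (lc p e c) ^ (p ^ i - 1) = 0 := by
    intro i h1 h2
    have hallsum : ∑ c : Fin r → ZMod p, (lc p e c) ^ (p ^ i - 1) = 0 := by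
      rw [← hvanish 0 i h1 h2]
      refine Fintype.sum_equiv (Equiv.neg _) _ _ fun c => ?_
      simp only [Equiv.neg_apply, lc_neg, zero_sub, neg_neg]
    rw [← hallsum,
      ← Finset.sum_filter_add_sum_filter_not univ (fun c : Fin r → ZMod p => c ≠ 0)
        (fun c => (lc p e c) ^ (p ^ i - 1))]
    have hz : ∑ c ∈ univ.filter (fun c : Fin r → ZMod p => ¬ c ≠ 0),
        (lc p e c) ^ (p ^ i - 1) = 0 := by
      refine Finset.sum_eq_zero fun c hc => ?_
      simp only [mem_filter, not_not] at hc
      rw [hc.2, lc_zero, zero_pow (by have := hqpow2 i h1; omega)]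
    rw [hz, add_zero]
  have hfiltercard : (univ.filter (fun c : Fin r → ZMod p => c ≠ 0)).card = p ^ r - 1 := by
    rw [Finset.filter_ne', Finset.card_erase_of_mem (mem_univ _), hcard]
  -- the w = 0 case
  have hG0 : ∑ c : Fin r → ZMod p, (lc p e c) ^ (p ^ r - 1)
      = ∏ c ∈ univ.filter (fun c : Fin r → ZMod p => c ≠ 0), lc p e c := by
    have hsplit : ∑ c : Fin r → ZMod p, (lc p e c) ^ (p ^ r - 1)
        = ∑ c ∈ univ.filter (fun c : Fin r → ZMod p => c ≠ 0), (lc p e c) ^ (p ^ r - 1) := by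
      rw [← Finset.sum_filter_add_sum_filter_not univ (fun c : Fin r → ZMod p => c ≠ 0)]
      have hz : ∑ c ∈ univ.filter (fun c : Fin r → ZMod p => ¬ c ≠ 0),
          (lc p e c) ^ (p ^ r - 1) = 0 := by
        refine Finset.sum_eq_zero fun c hc => ?_
        simp only [mem_filter, not_not] at hc
        rw [hc.2, lc_zero, zero_pow (by omega)]
      rw [hz, add_zero]
    rw [hsplit]
    have hflip : ∀ c : Fin r → ZMod p, (0:K) - lc p e (-c) = lc p e c := by
      intro c; rw [lc_neg]; ring
    have hterm : ∀ c ∈ univ.filter (fun c : Fin r → ZMod p => c ≠ 0),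
        (lc p e c) ^ (p ^ r - 1)
          = - ∑ i ∈ range r, a i * (lc p e c) ^ (p ^ i - 1) := by
      intro c hc
      simp only [mem_filter, mem_univ, true_and] at hc
      have hu : (0:K) - lc p e (-c) ≠ 0 := by
        rw [hflip]
        intro h; exact hc (hinj c h)
      have hd := hdiv 0 (-c) hu
      rw [hflip] at hd
      rw [hd, hβ0, zero_div, zero_sub]
    rw [Finset.sum_congr rfl hterm, Finset.sum_neg_distrib, Finset.sum_comm]
    obtain ⟨s, rfl⟩ : ∃ s, r = s + 1 := ⟨r - 1, by omega⟩
    rw [Finset.sum_range_succ']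
    have hz3 : ∀ i ∈ range s,
        ∑ c ∈ univ.filter (fun c : Fin (s+1) → ZMod p => c ≠ 0),
          a (i+1) * (lc p e c) ^ (p ^ (i+1) - 1) = 0 := by
      intro i hi
      rw [← Finset.mul_sum, hT (i+1) (by omega) (by have := mem_range.mp hi; omega), mul_zero]
    rw [Finset.sum_congr rfl hz3, Finset.sum_const, smul_zero, zero_add]
    -- remaining : -(∑_{c ≠ 0} a 0 * (lc e c)^(p^0 - 1)) = ∏ ...
    have h00 : (p : ℕ) ^ 0 - 1 = 0 := by simp
    rw [h00]
    simp only [pow_zero, mul_one]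
    rw [Finset.sum_const, hfiltercard, nsmul_eq_mul, Nat.cast_sub hq1, Nat.cast_pow,
      CharP.cast_eq_zero, zero_pow hrpos.ne', Nat.cast_one, zero_sub, neg_mul, neg_neg, one_mul,
      ha0]
  -- general w
  by_cases hall : ∀ c : Fin r → ZMod p, w - lc p e c ≠ 0
  · have hneg : ∑ c : Fin r → ZMod p, (w + lc p e c) ^ (p ^ r - 1)
        = ∑ c : Fin r → ZMod p, (w - lc p e c) ^ (p ^ r - 1) := by
      refine Fintype.sum_equiv (Equiv.neg _) _ _ fun c => ?_
      simp only [Equiv.neg_apply, lc_neg, sub_neg_eq_add]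
    rw [hneg, Finset.sum_congr rfl (fun c _ => hdiv w c (hall c)), Finset.sum_sub_distrib]
    have hfirst : ∑ c : Fin r → ZMod p,
        (∑ i ∈ range (r+1), a i * w ^ (p ^ i)) / (w - lc p e c) = a 0 := by
      rw [← hF3 w]
      refine Finset.sum_congr rfl fun c _ => ?_
      rw [← hF2 w, eq_comm, eq_div_iff (hall c)]
      exact Finset.prod_erase_mul univ _ (mem_univ c)
    have hsecond : ∑ c : Fin r → ZMod p,
        ∑ i ∈ range r, a i * (w - lc p e c) ^ (p ^ i - 1) = 0 := by
      rw [Finset.sum_comm]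
      refine Finset.sum_eq_zero fun i hi => ?_
      rw [← Finset.mul_sum]
      rcases Nat.eq_zero_or_pos i with rfl | hipos
      · have hcol : ∑ c : Fin r → ZMod p, (w - lc p e c) ^ (p ^ 0 - 1) = 0 := by
          have h00 : (p : ℕ) ^ 0 - 1 = 0 := by simp
          rw [h00]
          simp only [pow_zero]
          rw [Finset.sum_const, hcard, nsmul_eq_mul, mul_one, Nat.cast_pow,
            CharP.cast_eq_zero, zero_pow hrpos.ne']
        rw [hcol, mul_zero]
      · rw [hvanish w i hipos (mem_range.mp hi), mul_zero]
    rw [hfirst, hsecond, sub_zero, ha0]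
  · push_neg at hall
    obtain ⟨c0, hc0⟩ := hall
    have hw : w = lc p e c0 := by rwa [sub_eq_zero] at hc0
    calc ∑ c : Fin r → ZMod p, (w + lc p e c) ^ (p ^ r - 1)
        = ∑ c : Fin r → ZMod p, (lc p e c) ^ (p ^ r - 1) := by
          refine Fintype.sum_equiv (Equiv.addLeft c0) _ _ fun c => ?_
          show (w + lc p e c) ^ (p ^ r - 1) = (lc p e (c0 + c)) ^ (p ^ r - 1)
          rw [lc_add, hw]
      _ = _ := hG0

end AuxiliaryLemmas

open Finset in
/-- Let `A` be a commutative `𝔽_p`-algebra and `E ⊆ A` an `𝔽_p`-subspace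
of dimension `r`.  Then `∑_{u ∈ E} u^{pʳ-1} = ∏_{u ∈ E \ {0}} u`. -/
theorem sum_pow_card_sub_one_eq_prod
    {p : ℕ} [Fact p.Prime] {A : Type*} [CommRing A] [Algebra (ZMod p) A]
    (E : Submodule (ZMod p) A) [Fintype E] {r : ℕ}
    (hr : Module.finrank (ZMod p) E = r) :
    ∑ u : E, (u : A) ^ (p ^ r - 1) =
      ∏ u ∈ Finset.univ.filter (fun u : E => u ≠ 0), (u : A) := by
  classical
  let b : Module.Basis (Fin r) (ZMod p) E := Module.finBasisOfFinrankEq (ZMod p) E hr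
  set v : Fin r → A := fun i => ((b i : E) : A) with hv
  have hucoe : ∀ u : E, (u : A) = lc p v (b.equivFun u) := by
    intro u
    conv_lhs => rw [← b.sum_equivFun u]
    rw [lc]
    rw [Submodule.coe_sum]
    refine Finset.sum_congr rfl fun i _ => ?_
    rw [SetLike.val_smul, Algebra.smul_def]
  have hsum : ∑ u : E, (u : A) ^ (p ^ r - 1)
      = ∑ c : Fin r → ZMod p, (lc p v c) ^ (p ^ r - 1) := by
    refine Fintype.sum_equiv b.equivFun.toEquiv _ _ fun u => ?_
    rw [hucoe u]
    rfl
  have hprod : ∏ u ∈ Finset.univ.filter (fun u : E => u ≠ 0), (u : A)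
      = ∏ c ∈ univ.filter (fun c : Fin r → ZMod p => c ≠ 0), lc p v c := by
    refine Finset.prod_nbij' (fun u => b.equivFun u) (fun c => b.equivFun.symm c)
      ?_ ?_ ?_ ?_ ?_
    · intro u hu
      simp only [mem_filter, mem_univ, true_and] at hu ⊢
      exact fun h => hu ((LinearEquiv.map_eq_zero_iff _).mp h)
    · intro c hc
      simp only [mem_filter, mem_univ, true_and] at hc ⊢
      exact fun h => hc ((LinearEquiv.map_eq_zero_iff _).mp h)
    · intro u _
      exact b.equivFun.symm_apply_apply u
    · intro c _
      exact b.equivFun.apply_symm_apply c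
    · intro u _
      exact hucoe u
  rw [hsum, hprod]
  set R' := MvPolynomial (Fin r) (ZMod p) with hR'
  let φ : R' →ₐ[ZMod p] A := MvPolynomial.aeval v
  have hφ : ∀ c : Fin r → ZMod p,
      lc p v c = φ (lc p (MvPolynomial.X : Fin r → R') c) := by
    intro c
    rw [lc, lc, map_sum]
    refine Finset.sum_congr rfl fun i _ => ?_
    rw [map_mul, MvPolynomial.aeval_X, AlgHom.commutes]
  suffices hRid : ∑ c : Fin r → ZMod p, (lc p (MvPolynomial.X : Fin r → R') c) ^ (p ^ r - 1)
      = ∏ c ∈ univ.filter (fun c : Fin r → ZMod p => c ≠ 0),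
          lc p (MvPolynomial.X : Fin r → R') c by
    calc ∑ c : Fin r → ZMod p, (lc p v c) ^ (p ^ r - 1)
        = φ (∑ c : Fin r → ZMod p,
            (lc p (MvPolynomial.X : Fin r → R') c) ^ (p ^ r - 1)) := by
          rw [map_sum]
          exact Finset.sum_congr rfl fun c _ => by rw [hφ c, ← map_pow]
      _ = φ (∏ c ∈ univ.filter (fun c : Fin r → ZMod p => c ≠ 0),
            lc p (MvPolynomial.X : Fin r → R') c) := by rw [hRid]
      _ = ∏ c ∈ univ.filter (fun c : Fin r → ZMod p => c ≠ 0), lc p v c := by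
          rw [map_prod]
          exact Finset.prod_congr rfl fun c _ => (hφ c).symm
  -- prove the identity in the polynomial ring via its fraction field
  letI hdom : IsDomain R' := inferInstance
  set K := FractionRing R' with hK
  have hinjψ : Function.Injective (algebraMap R' K) := IsFractionRing.injective R' K
  set eK : Fin r → K := fun i => algebraMap R' K (MvPolynomial.X i) with heK
  have hcompat : ∀ x : ZMod p,
      algebraMap (ZMod p) K x = algebraMap R' K (algebraMap (ZMod p) R' x) := by
    intro x
    rw [← IsScalarTower.algebraMap_apply]
  have hψlc : ∀ c, algebraMap R' K (lc p (MvPolynomial.X : Fin r → R') c) = lc p eK c := by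
    intro c
    rw [lc, lc, map_sum]
    refine Finset.sum_congr rfl fun i _ => ?_
    rw [map_mul, hcompat]
  have hinjK : ∀ c : Fin r → ZMod p, lc p eK c = 0 → c = 0 := by
    intro c h
    have h2 : lc p (MvPolynomial.X : Fin r → R') c = 0 := by
      apply hinjψ
      rw [hψlc, h, map_zero]
    funext i
    have h3 := congrArg (MvPolynomial.eval (fun j => if j = i then (1 : ZMod p) else 0)) h2
    rw [lc] at h3
    simp only [map_sum, map_zero, map_mul, MvPolynomial.eval_X, MvPolynomial.algebraMap_eq,
      MvPolynomial.eval_C, mul_ite, mul_one, mul_zero, Finset.sum_ite_eq', mem_univ,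
      if_pos] at h3
    exact h3
  have hmain := main_field (p := p) (K := K) r eK hinjK 0
  simp only [zero_add] at hmain
  apply hinjψ
  rw [map_sum, map_prod]
  calc ∑ c : Fin r → ZMod p,
        algebraMap R' K ((lc p (MvPolynomial.X : Fin r → R') c) ^ (p ^ r - 1))
      = ∑ c : Fin r → ZMod p, (lc p eK c) ^ (p ^ r - 1) :=
        Finset.sum_congr rfl fun c _ => by rw [map_pow, hψlc c]
    _ = ∏ c ∈ univ.filter (fun c : Fin r → ZMod p => c ≠ 0), lc p eK c := hmain
    _ = _ := (Finset.prod_congr rfl fun c _ => (hψlc c).symm)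
end

section
/- Let S be a group, Γ = S ⋉ (*_{p∈P} F_p) a mixed product acting on a set Ω, and (Ω_p)_{p∈P} a family of subsets of Ω. Assume: (i) the free product is nondegenerate and the mixed product nondihedral; (ii) the core in Γ of ∩_{p∈P} S_p is trivial; (iii) the Ω_p are nonempty and pairwise disjoint; and (iv) for all p ≠ q and all g ∈ F_p \ {1}, g·Ω_q ⊆ Ω_p. Then the action of Γ on Ω is faithful. -/
open Monoid Cardinal Pointwise

theorem aux_three_le {α : Type*} [Nontrivial α] (h : Nat.card α ≠ 2) : 3 ≤ #α := by
  cases finite_or_infinite α with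
  | inl hfin =>
    have hlt : #α < ℵ₀ := lt_aleph0_iff_finite.mpr hfin
    have hcast : ((Nat.card α : ℕ) : Cardinal) = #α := Cardinal.cast_toNat_of_lt_aleph0 hlt
    have h2 : 2 ≤ #α := Cardinal.two_le_iff.mpr (exists_pair_ne α)
    have h2' : 2 ≤ Nat.card α := by
      rw [← hcast] at h2
      exact_mod_cast h2
    have h3 : 3 ≤ Nat.card α := by omega
    calc (3 : Cardinal) = ((3:ℕ) : Cardinal) := by norm_cast
    _ ≤ ((Nat.card α : ℕ) : Cardinal) := by exact_mod_cast h3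
    _ = #α := hcast
  | inr hinf =>
    calc (3 : Cardinal) = ((3:ℕ) : Cardinal) := by norm_cast
    _ ≤ ℵ₀ := (Cardinal.nat_lt_aleph0 3).le
    _ ≤ #α := Cardinal.aleph0_le_mk α

theorem aux_not_three_le {α : Type u_1} {a b : α} (h : ∀ z : α, z = a ∨ z = b) : ¬ 3 ≤ #α := by
  intro h3
  have hsurj' : Function.Surjective (fun c : ULift.{u_1} Bool => if c.down then a else b) := by
    intro z
    rcases h z with rfl | rfl
    · exact ⟨⟨true⟩, by simp⟩
    · exact ⟨⟨false⟩, by simp⟩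
  have hle : #α ≤ 2 := by
    calc #α ≤ #(ULift.{u_1} Bool) := Cardinal.mk_le_of_surjective hsurj'
    _ = 2 := by simp
  have : (3:Cardinal) ≤ 2 := h3.trans hle
  norm_num at this


set_option maxHeartbeats 2000000

/-- ping-pong: Let `Γ = S ⋉ (*_{p ∈ P} F p)` be a nondegenerate,
nondihedral mixed product (encoded internally) with trivial core of `⋂_p S_p`, acting on
a set `Ω`, and let `(Ω_p)` be nonempty pairwise disjoint subsets with
`g • Ω_q ⊆ Ω_p` for every `g ∈ F_p \ {1}` and `q ≠ p`.  Then `Γ` acts faithfully. -/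
theorem mixed_product_ping_pong
    {Γ : Type*} [Group Γ] (S : Subgroup Γ) {P : Type*} [MulAction S P]
    (F : P → Subgroup Γ)
    (hconj : ∀ (s : S) (p : P),
      (F p).map (MulAut.conj (s : Γ)).toMonoidHom = F (s • p))
    (hfree : Function.Injective (CoprodI.lift (fun p => (F p).subtype)))
    (hN : (⨆ p, F p).Normal)
    (hdisj : (⨆ p, F p) ⊓ S = ⊥)
    (hgen : S ⊔ (⨆ p, F p) = ⊤)
    -- (i) nondegeneracy and nondihedrality:
    (hP : Nontrivial P) (hF : ∀ p, F p ≠ ⊥)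
    (hnondihedral : ¬ (Nat.card P = 2 ∧ (∀ p, Nat.card (F p) = 2) ∧
      (S = ⊥ ∨ (Nat.card S = 2 ∧ ∀ s : S, s ≠ 1 → ∀ p : P, s • p ≠ p))))
    -- (ii) trivial core of the intersection of stabilizers:
    (hcore : (((⨅ p : P, MulAction.stabilizer S p).map S.subtype)).normalCore = ⊥)
    -- the action of `Γ` on `Ω` and the ping-pong subsets:
    {Ω : Type*} [MulAction Γ Ω] (Os : P → Set Ω)
    -- (iii):
    (hne : ∀ p, (Os p).Nonempty)
    (hdisjoint : Pairwise (fun p q => Disjoint (Os p) (Os q)))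
    -- (iv):
    (hpingpong : ∀ p q : P, p ≠ q → ∀ g ∈ F p, g ≠ 1 →
      ∀ ω ∈ Os q, g • ω ∈ Os p) :
    ∀ γ : Γ, (∀ ω : Ω, γ • ω = ω) → γ = 1 := by
  classical
  haveI : Nontrivial P := hP
  haveI hFnontriv : ∀ p, Nontrivial ↥(F p) := by
    intro p
    exact (Subgroup.nontrivial_iff_ne_bot (F p)).mpr (hF p)
  set ι : CoprodI (fun p => ↥(F p)) →* Γ := CoprodI.lift (fun p => (F p).subtype) with hιdef
  have hι_of : ∀ {p : P} (x : ↥(F p)), ι (CoprodI.of x) = ↑x := by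
    intro p x
    simp [hιdef, CoprodI.lift_of]
  have hrange : ι.range = ⨆ p, F p := by
    rw [hιdef, CoprodI.range_eq_iSup]
    simp [Subgroup.range_subtype]
  -- elements of N are in the image
  have hmemN : ∀ x : Γ, x ∈ (⨆ p, F p) → ∃ v, ι v = x := by
    intro x hx
    rwa [← hrange] at hx
  -- Step 1 : dispose of dihedral parameters, get cardinality condition
  have hcard : 3 ≤ #P ∨ ∃ p, 3 ≤ #(↥(F p)) := by
    by_contra hc
    push_neg at hc
    obtain ⟨hc1, hc2⟩ := hc
    have hP2 : Nat.card P = 2 := by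
      by_contra hh
      exact absurd (aux_three_le hh) (not_le.mpr hc1)
    have hF2 : ∀ p, Nat.card ↥(F p) = 2 := by
      intro p
      by_contra hh
      exact absurd (aux_three_le hh) (not_le.mpr (hc2 p))
    have hcent : ∀ s : ↥S, (∀ p : P, s • p = p) → ∀ x ∈ (⨆ p, F p), (↑s : Γ) * x = x * ↑s := by
      intro s hs x hx
      refine Subgroup.iSup_induction F (C := fun z => (↑s : Γ) * z = z * ↑s) hx ?_ (by simp) ?_
      · intro p g hg
        rcases eq_or_ne g 1 with rfl | hg1
        · simp
        have hmem : (↑s : Γ) * g * (↑s : Γ)⁻¹ ∈ F p := by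
          have h1 := hconj s p
          rw [hs p] at h1
          rw [← h1]
          exact ⟨g, hg, by simp [MulAut.conj_apply]⟩
        have hmem1 : (↑s : Γ) * g * (↑s : Γ)⁻¹ ≠ 1 := by
          intro hcon
          apply hg1
          calc g = (↑s : Γ)⁻¹ * ((↑s : Γ) * g * (↑s : Γ)⁻¹) * ↑s := by group
          _ = 1 := by rw [hcon]; group
        obtain ⟨z, hz, huniq⟩ := (Nat.card_eq_two_iff' (1 : ↥(F p))).mp (hF2 p)
        have e1 : (⟨g, hg⟩ : ↥(F p)) = z :=
          huniq _ (fun hcon => hg1 (by simpa [Subtype.ext_iff] using hcon))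
        have e2 : (⟨_, hmem⟩ : ↥(F p)) = z :=
          huniq _ (fun hcon => hmem1 (by simpa [Subtype.ext_iff] using hcon))
        have e3 : (↑s : Γ) * g * (↑s : Γ)⁻¹ = g := by
          have := e2.trans e1.symm
          simpa [Subtype.ext_iff] using this
        calc (↑s : Γ) * g = ((↑s : Γ) * g * (↑s : Γ)⁻¹) * ↑s := by group
        _ = g * ↑s := by rw [e3]
      · intro a b ha hb
        rw [← mul_assoc, ha, mul_assoc, hb, ← mul_assoc]
    have hstab_bot : (⨅ p : P, MulAction.stabilizer (↥S) p) = ⊥ := by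
      rw [eq_bot_iff]
      intro s hs
      simp only [Subgroup.mem_iInf, MulAction.mem_stabilizer_iff] at hs
      have hsm : (↑s : Γ) ∈ ((⨅ p : P, MulAction.stabilizer (↥S) p).map S.subtype).normalCore := by
        intro b
        have hb : b ∈ (↑S * ↑(⨆ p, F p) : Set Γ) := by
          rw [← Subgroup.mul_normal S (⨆ p, F p), hgen]
          trivial
        obtain ⟨t, ht, x, hx, rfl⟩ := hb
        have hcomm := hcent s hs x hx
        have hxs : x * (↑s : Γ) * x⁻¹ = ↑s := by rw [← hcomm]; group
        have hbs : (t * x) * (↑s : Γ) * (t * x)⁻¹ = t * ↑s * t⁻¹ := by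
          calc (t * x) * (↑s : Γ) * (t * x)⁻¹ = t * (x * ↑s * x⁻¹) * t⁻¹ := by group
          _ = t * ↑s * t⁻¹ := by rw [hxs]
        rw [hbs]
        refine Subgroup.mem_map.mpr ⟨(⟨t, ht⟩ : ↥S) * s * (⟨t, ht⟩ : ↥S)⁻¹, ?_, ?_⟩
        · simp only [Subgroup.mem_iInf, MulAction.mem_stabilizer_iff]
          intro p
          rw [mul_smul, mul_smul, hs, smul_inv_smul]
        · rfl
      rw [hcore] at hsm
      have hs1 : (↑s : Γ) = 1 := Subgroup.mem_bot.mp hsm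
      exact Subgroup.mem_bot.mpr (OneMemClass.coe_eq_one.mp hs1)
    apply hnondihedral
    refine ⟨hP2, hF2, ?_⟩
    by_cases hSbot : S = ⊥
    · exact Or.inl hSbot
    have hnofix : ∀ s : ↥S, s ≠ 1 → ∀ p : P, s • p ≠ p := by
      intro s hs1 p hp
      obtain ⟨z, hz, huniq⟩ := (Nat.card_eq_two_iff' p).mp hP2
      have hsz : s • z = z := by
        have h1 : s • z ≠ p := by
          intro hcon
          rw [← hp] at hcon
          exact hz (smul_left_cancel s hcon)
        exact huniq _ h1
      have hmem : s ∈ ⨅ p : P, MulAction.stabilizer (↥S) p := by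
        simp only [Subgroup.mem_iInf, MulAction.mem_stabilizer_iff]
        intro r
        rcases eq_or_ne r p with rfl | hr
        · exact hp
        · rw [huniq r hr]; exact hsz
      rw [hstab_bot] at hmem
      exact hs1 (Subgroup.mem_bot.mp hmem)
    refine Or.inr ⟨?_, hnofix⟩
    rw [Nat.card_eq_two_iff' (1 : ↥S)]
    obtain ⟨s₀, hs₀⟩ := Subgroup.ne_bot_iff_exists_ne_one.mp hSbot
    refine ⟨s₀, hs₀, ?_⟩
    intro s hs
    have hmem : s₀⁻¹ * s ∈ ⨅ p : P, MulAction.stabilizer (↥S) p := by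
      simp only [Subgroup.mem_iInf, MulAction.mem_stabilizer_iff]
      intro p
      obtain ⟨z, hz, huniq⟩ := (Nat.card_eq_two_iff' p).mp hP2
      have h1 : s • p = z := huniq _ (hnofix s hs p)
      have h2 : s₀ • p = z := huniq _ (hnofix s₀ hs₀ p)
      rw [mul_smul, h1, ← h2, inv_smul_smul]
    rw [hstab_bot] at hmem
    have := Subgroup.mem_bot.mp hmem
    rw [inv_mul_eq_one] at this
    exact this.symm
  -- Step 2 : ping-pong machinery
  set f' : ∀ p, ↥(F p) →* Equiv.Perm Ω :=
    fun p => (MulAction.toPermHom Γ Ω).comp (F p).subtype with hf'def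
  have hpp' : Pairwise fun p q => ∀ h : ↥(F p), h ≠ 1 → f' p h • Os q ⊆ Os p := by
    intro p q hpq x hx
    intro ω' hω'
    rw [Set.mem_smul_set] at hω'
    obtain ⟨ω, hω, rfl⟩ := hω'
    have hx' : (↑x : Γ) ≠ 1 := by
      simpa [← OneMemClass.coe_eq_one] using hx
    have hmem := hpingpong p q hpq ↑x x.2 hx' ω hω
    simpa [hf'def, Equiv.Perm.smul_def] using hmem
  have hlift : ∀ v, CoprodI.lift f' v = MulAction.toPermHom Γ Ω (ι v) := by
    intro v
    induction v using CoprodI.induction_on with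
    | one => ext ω; simp
    | of i x => simp [hf'def, hι_of]
    | mul x y hx hy => simp [map_mul, hx, hy]
  have hinj' : Function.Injective (CoprodI.lift f') :=
    CoprodI.lift_injective_of_ping_pong f' hcard Os hne hdisjoint hpp'
  have hNfaith : ∀ v, (∀ ω : Ω, ι v • ω = ω) → v = 1 := by
    intro v hv
    apply hinj'
    rw [map_one, hlift]
    ext ω
    simpa using hv ω
  have hnontriv : ∀ {i j : P} (u : CoprodI.NeWord (fun p => ↥(F p)) i j), u.prod ≠ 1 := by
    intro i j u hu
    have h1 := CoprodI.lift_word_prod_nontrivial_of_not_empty f' hcard Os hne hdisjoint hpp' u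
    rw [hu, map_one] at h1
    exact h1 rfl
  have key : ∀ {i₁ j₁ i₂ j₂ : P} (u₁ : CoprodI.NeWord (fun p => ↥(F p)) i₁ j₁)
      (u₂ : CoprodI.NeWord (fun p => ↥(F p)) i₂ j₂),
      u₁.prod = u₂.prod → i₁ = i₂ ∧ j₁ = j₂ := by
    intro i₁ j₁ i₂ j₂ u₁ u₂ hprod
    have hj : j₁ = j₂ := by
      by_contra hj
      have := hnontriv (u₁.append hj u₂.inv)
      rw [CoprodI.NeWord.append_prod, CoprodI.NeWord.inv_prod, hprod, mul_inv_cancel] at this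
      exact this rfl
    subst hj
    have hi : i₁ = i₂ := by
      by_contra hi
      have := hnontriv (u₂.inv.append (Ne.symm hi) u₁)
      rw [CoprodI.NeWord.append_prod, CoprodI.NeWord.inv_prod, hprod, inv_mul_cancel] at this
      exact this rfl
    exact ⟨hi, rfl⟩
  -- Step 3 : every kernel element is in (⨅ stab).map
  have hker : ∀ δ : Γ, (∀ ω : Ω, δ • ω = ω) →
      δ ∈ (⨅ p : P, MulAction.stabilizer S p).map S.subtype := by
    intro δ hδ
    have hδ' : ∀ ω : Ω, δ⁻¹ • ω = ω := by
      intro ω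
      conv_lhs => rw [← hδ ω]
      rw [inv_smul_smul]
    have hcomm : ∀ x ∈ (⨆ p, F p), δ * x = x * δ := by
      intro x hx
      have hcmem : δ * x * δ⁻¹ * x⁻¹ ∈ (⨆ p, F p) :=
        mul_mem (hN.conj_mem x hx δ) (inv_mem hx)
      obtain ⟨u, hu⟩ := hmemN _ hcmem
      have hu1 : u = 1 := by
        apply hNfaith
        intro ω
        rw [hu]
        simp only [mul_smul]
        rw [hδ', smul_inv_smul]
        exact hδ ω
      have he : δ * x * δ⁻¹ * x⁻¹ = 1 := by rw [← hu, hu1, map_one]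
      calc δ * x = (δ * x * δ⁻¹ * x⁻¹) * (x * δ) := by group
      _ = x * δ := by rw [he, one_mul]
    have hb : δ ∈ (↑S * ↑(⨆ p, F p) : Set Γ) := by
      rw [← Subgroup.mul_normal S (⨆ p, F p), hgen]
      trivial
    obtain ⟨t, ht, x, hx, rfl⟩ := hb
    obtain ⟨v, hv⟩ := hmemN x hx
    have hσinj : Function.Injective (fun p : P => (⟨t, ht⟩ : ↥S)⁻¹ • p) :=
      MulAction.injective _
    have hconjm : ∀ p : P, ∀ g ∈ F p, x * g * x⁻¹ ∈ F ((⟨t, ht⟩ : ↥S)⁻¹ • p) := by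
      intro p g hg
      have hgN : g ∈ ⨆ p, F p := Subgroup.mem_iSup_of_mem p hg
      have hcg := hcomm g hgN
      have h1 : (t * x) * g * (t * x)⁻¹ = g := by rw [hcg, mul_inv_cancel_right]
      have h2 : x * g * x⁻¹ = t⁻¹ * g * t := by
        calc x * g * x⁻¹ = t⁻¹ * ((t * x) * g * (t * x)⁻¹) * t := by group
        _ = t⁻¹ * g * t := by rw [h1]
      rw [h2]
      rw [← hconj (⟨t, ht⟩ : ↥S)⁻¹ p]
      refine ⟨g, hg, ?_⟩
      show (↑(⟨t, ht⟩ : ↥S)⁻¹ : Γ) * g * (↑(⟨t, ht⟩ : ↥S)⁻¹ : Γ)⁻¹ = t⁻¹ * g * t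
      simp
    have hrel : ∀ {p q : P} (xx : ↥(F p)) (y : ↥(F q)), (↑y : Γ) = x * ↑xx * x⁻¹ →
        v * CoprodI.of (M := fun p => ↥(F p)) xx = CoprodI.of (M := fun p => ↥(F p)) y * v := by
      intro p q xx y hy
      apply hfree
      rw [map_mul, map_mul, hι_of, hι_of, hv, hy]
      group
    have hsub_ne : ∀ {q : P} (z : ↥(F q)), (↑z : Γ) ≠ 1 → z ≠ 1 :=
      fun z hz hcon => hz (by simp [hcon])
    have hcoe_ne : ∀ {q : P} (z : ↥(F q)), z ≠ 1 → (↑z : Γ) ≠ 1 := by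
      intro q z hz hcon
      exact hz (OneMemClass.coe_eq_one.mp hcon)
    have hconj_ne : ∀ (g : Γ), g ≠ 1 → x * g * x⁻¹ ≠ 1 := by
      intro g hg hcon
      apply hg
      calc g = x⁻¹ * (x * g * x⁻¹) * x := by group
      _ = 1 := by rw [hcon]; group
    have hv1 : v = 1 := by
      by_contra hv0
      have hw0 : CoprodI.Word.equiv v ≠ CoprodI.Word.empty := by
        intro hcon
        apply hv0
        have h2 : v = (CoprodI.Word.equiv (M := fun p => ↥(F p))).symm CoprodI.Word.empty := by
          rw [← hcon, Equiv.symm_apply_apply]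
        rw [h2]
        show CoprodI.Word.prod CoprodI.Word.empty = 1
        exact CoprodI.Word.prod_empty
      obtain ⟨h, l, w, hw⟩ := CoprodI.NeWord.of_word _ hw0
      have hwv : w.prod = v := by
        rw [CoprodI.NeWord.prod, hw]
        show (CoprodI.Word.equiv (M := fun p => ↥(F p))).symm (CoprodI.Word.equiv v) = v
        exact Equiv.symm_apply_apply _ _
      have stepA : ∀ p : P, p ≠ l → (⟨t, ht⟩ : ↥S)⁻¹ • p = h := by
        intro p hpl
        obtain ⟨xx, hxx⟩ := exists_ne (1 : ↥(F p))
        have hyv : x * ↑xx * x⁻¹ ∈ F ((⟨t, ht⟩ : ↥S)⁻¹ • p) := hconjm p ↑xx xx.2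
        have hy1 : (⟨x * ↑xx * x⁻¹, hyv⟩ : ↥(F ((⟨t, ht⟩ : ↥S)⁻¹ • p))) ≠ 1 :=
          hsub_ne _ (hconj_ne ↑xx (hcoe_ne xx hxx))
        by_contra hσh
        have hprod : (CoprodI.NeWord.append w (Ne.symm hpl) (CoprodI.NeWord.singleton xx hxx)).prod
            = (CoprodI.NeWord.append (CoprodI.NeWord.singleton _ hy1) hσh w).prod := by
          rw [CoprodI.NeWord.append_prod, CoprodI.NeWord.append_prod,
            CoprodI.NeWord.prod_singleton, CoprodI.NeWord.prod_singleton, hwv]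
          exact hrel xx ⟨x * ↑xx * x⁻¹, hyv⟩ rfl
        exact hpl (key _ _ hprod).2
      obtain ⟨p₀, hp₀⟩ := exists_ne l
      have hσp₀ : (⟨t, ht⟩ : ↥S)⁻¹ • p₀ = h := stepA p₀ hp₀
      have hPsub : ∀ p : P, p = l ∨ p = p₀ := by
        intro p
        rcases eq_or_ne p l with rfl | hpl
        · exact Or.inl rfl
        · exact Or.inr (hσinj ((stepA p hpl).trans hσp₀.symm))
      have hσl : (⟨t, ht⟩ : ↥S)⁻¹ • l ≠ h := by
        intro hh
        exact hp₀ (hσinj (hσp₀.trans hh.symm))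
      have stepC : ∀ z : ↥(F l), z = 1 ∨ z = (w.last)⁻¹ := by
        intro z
        rcases eq_or_ne z 1 with rfl | hz1
        · exact Or.inl rfl
        refine Or.inr ?_
        by_contra hzw
        have hyv : x * ↑z * x⁻¹ ∈ F ((⟨t, ht⟩ : ↥S)⁻¹ • l) := hconjm l ↑z z.2
        have hy1 : (⟨x * ↑z * x⁻¹, hyv⟩ : ↥(F ((⟨t, ht⟩ : ↥S)⁻¹ • l))) ≠ 1 :=
          hsub_ne _ (hconj_ne ↑z (hcoe_ne z hz1))
        have hmh : z⁻¹ * w.inv.head ≠ 1 := by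
          rw [CoprodI.NeWord.inv_head]
          intro hcon
          apply hzw
          have h3 : z⁻¹ = w.last := by rwa [mul_inv_eq_one] at hcon
          rw [← h3, inv_inv]
        have r1 : (CoprodI.NeWord.mulHead w.inv z⁻¹ hmh).inv.prod = v * CoprodI.of (M := fun p => ↥(F p)) z := by
          rw [CoprodI.NeWord.inv_prod, CoprodI.NeWord.mulHead_prod, CoprodI.NeWord.inv_prod, hwv]
          rw [map_inv]
          simp [mul_inv_rev]
        have r2 : (CoprodI.NeWord.append (CoprodI.NeWord.singleton _ hy1) hσl w).prod
            = CoprodI.of (M := fun p => ↥(F p)) (⟨x * ↑z * x⁻¹, hyv⟩ : ↥(F ((⟨t, ht⟩ : ↥S)⁻¹ • l))) * v := by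
          rw [CoprodI.NeWord.append_prod, CoprodI.NeWord.prod_singleton, hwv]
        have hkey := key _ _ (r1.trans ((hrel z ⟨x * ↑z * x⁻¹, hyv⟩ rfl).trans r2.symm))
        exact hσl hkey.1.symm
      have stepD : ∀ z : ↥(F p₀), z ≠ 1 → (x * ↑z * x⁻¹ : Γ) = (↑(w.head) : Γ)⁻¹ := by
        intro z hz1
        by_contra hne'
        have hyv : x * ↑z * x⁻¹ ∈ F h := by
          rw [← hσp₀]
          exact hconjm p₀ ↑z z.2
        have hy1 : (⟨x * ↑z * x⁻¹, hyv⟩ : ↥(F h)) ≠ 1 :=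
          hsub_ne _ (hconj_ne ↑z (hcoe_ne z hz1))
        have hmh : (⟨x * ↑z * x⁻¹, hyv⟩ : ↥(F h)) * w.head ≠ 1 := by
          intro hcon
          apply hne'
          have h3 : (⟨x * ↑z * x⁻¹, hyv⟩ : ↥(F h)) = (w.head)⁻¹ := by
            rwa [mul_eq_one_iff_eq_inv] at hcon
          have h4 := congrArg (Subtype.val) h3
          simpa using h4
        have r2 : (CoprodI.NeWord.mulHead w _ hmh).prod
            = CoprodI.of (M := fun p => ↥(F p)) (⟨x * ↑z * x⁻¹, hyv⟩ : ↥(F h)) * v := by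
          rw [CoprodI.NeWord.mulHead_prod, hwv]
        have r1 : (CoprodI.NeWord.append w (Ne.symm hp₀) (CoprodI.NeWord.singleton z hz1)).prod
            = v * CoprodI.of (M := fun p => ↥(F p)) z := by
          rw [CoprodI.NeWord.append_prod, CoprodI.NeWord.prod_singleton, hwv]
        have hkey := key _ _ (r1.trans ((hrel z ⟨x * ↑z * x⁻¹, hyv⟩ rfl).trans r2.symm))
        exact hp₀ hkey.2
      rcases hcard with h3P | ⟨c, h3c⟩
      · exact aux_not_three_le hPsub h3P
      · rcases hPsub c with rfl | rfl
        · exact aux_not_three_le stepC h3c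
        · obtain ⟨z₀, hz₀⟩ := exists_ne (1 : ↥(F c))
          have hall : ∀ z : ↥(F c), z = 1 ∨ z = z₀ := by
            intro z
            rcases eq_or_ne z 1 with rfl | hz
            · exact Or.inl rfl
            refine Or.inr ?_
            have e1 := stepD z hz
            have e2 := stepD z₀ hz₀
            have e3 : (↑z : Γ) = ↑z₀ :=
              mul_left_cancel (mul_right_cancel (e1.trans e2.symm))
            exact Subtype.ext e3
          exact aux_not_three_le hall h3c
    have hx1 : x = 1 := by rw [← hv, hv1, map_one]
    have hfix : ∀ p : P, (⟨t, ht⟩ : ↥S)⁻¹ • p = p := by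
      intro p
      by_contra hnep
      obtain ⟨g, hg⟩ := exists_ne (1 : ↥(F p))
      have hgσ : (↑g : Γ) ∈ F ((⟨t, ht⟩ : ↥S)⁻¹ • p) := by
        have h5 := hconjm p ↑g g.2
        rwa [hx1, one_mul, inv_one, mul_one] at h5
      have hof : CoprodI.of (M := fun p => ↥(F p)) g = CoprodI.of (M := fun p => ↥(F p)) (⟨↑g, hgσ⟩ : ↥(F ((⟨t, ht⟩ : ↥S)⁻¹ • p))) := by
        apply hfree
        rw [hι_of, hι_of]
      have hkey := key (CoprodI.NeWord.singleton g hg)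
        (CoprodI.NeWord.singleton (⟨↑g, hgσ⟩ : ↥(F ((⟨t, ht⟩ : ↥S)⁻¹ • p)))
          (hsub_ne _ (hcoe_ne g hg)))
        (by rw [CoprodI.NeWord.prod_singleton, CoprodI.NeWord.prod_singleton, hof])
      exact hnep hkey.1.symm
    refine Subgroup.mem_map.mpr ⟨(⟨t, ht⟩ : ↥S), ?_, ?_⟩
    · simp only [Subgroup.mem_iInf, MulAction.mem_stabilizer_iff]
      intro p
      have h2 : (⟨t, ht⟩ : ↥S) • ((⟨t, ht⟩ : ↥S)⁻¹ • p) = p := smul_inv_smul _ p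
      rw [hfix p] at h2
      exact h2
    · show t = t * x
      rw [hx1, mul_one]
  -- conclusion
  intro γ hγ
  have hcore' : γ ∈ ((⨅ p : P, MulAction.stabilizer S p).map S.subtype).normalCore := by
    intro b
    apply hker
    intro ω
    have h1 := hγ (b⁻¹ • ω)
    calc (b * γ * b⁻¹) • ω = b • γ • b⁻¹ • ω := by rw [mul_smul, mul_smul]
    _ = b • b⁻¹ • ω := by rw [h1]
    _ = ω := smul_inv_smul b ω
  rw [hcore] at hcore'
  exact Subgroup.mem_bot.mp hcore'
end

section
/- Let 𝔽 be a field and G(r)' be any group of the form E ⋉ M, where E is an r-dimensional 𝔽_p-subspace of a prime (i.e. entire) commutative 𝔽_p-algebra A contained in a proper nonzero ideal I, M is the additive subgroup of I[t] generated by the polynomials f(t+u) for u ∈ E where f(t) = a·t^{pʳ-1} with a ∈ I \ {0}, and E acts on M via translation of the variable t. Then E ⋉ M is nilpotent of nilpotency class exactly 1 + r(p-1). -/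
open Polynomial

section

variable {A : Type*} [CommRing A]

/-- Translation of the variable `t ↦ t + a` as an automorphism of the additive group
`A[t]` (written multiplicatively). -/
noncomputable def shiftAut (a : A) : MulAut (Multiplicative (Polynomial A)) where
  toFun f := Multiplicative.ofAdd (f.toAdd.comp (X + C a))
  invFun f := Multiplicative.ofAdd (f.toAdd.comp (X - C a))
  left_inv f := by
    simp [Polynomial.comp_assoc, add_comp, sub_comp]
  right_inv f := by
    simp [Polynomial.comp_assoc, add_comp, sub_comp]
  map_mul' f g := by
    simp [add_comp]

/-- The translation action of the additive group `A` on `A[t]`. -/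
noncomputable def shiftHom :
    Multiplicative A →* MulAut (Multiplicative (Polynomial A)) where
  toFun a := shiftAut a.toAdd
  map_one' := by
    ext f
    simp [shiftAut]
  map_mul' a b := by
    ext f
    simp [shiftAut, Polynomial.comp_assoc, add_comp, C_add, add_assoc]

/-- The group `A ⋉ A[t]`, with `A` acting by translation of the variable;
`G(I) = I ⋉ I[t]` sits inside it. -/
noncomputable abbrev bigGroup (A : Type*) [CommRing A] : Type _ :=
  SemidirectProduct (Multiplicative (Polynomial A)) (Multiplicative A) shiftHom

end


open Polynomial Finset

section NatAux

variable {p : ℕ} [Fact p.Prime]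

private lemma hp2' : 2 ≤ p := (Fact.out : p.Prime).two_le

private lemma digitSum_pos : ∀ {k : ℕ}, 0 < k → 0 < (Nat.digits p k).sum := by
  intro k
  induction k using Nat.strong_induction_on with
  | _ k ih =>
    intro hk
    have hp1 : 1 < p := hp2'
    rw [Nat.digits_def' hp1 hk, List.sum_cons]
    rcases Nat.eq_zero_or_pos (k % p) with h | h
    · have hdvd : p ∣ k := Nat.dvd_of_mod_eq_zero h
      have hkp : 0 < k / p := Nat.div_pos (Nat.le_of_dvd hk hdvd) (by omega)
      have := ih (k / p) (Nat.div_lt_self hk hp1) hkp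
      omega
    · omega

private lemma digitSum_le : ∀ (r : ℕ) {k : ℕ}, k < p ^ r → (Nat.digits p k).sum ≤ r * (p - 1) := by
  intro r
  induction r with
  | zero =>
    intro k hk
    rw [pow_zero] at hk
    have : k = 0 := by omega
    subst this; simp
  | succ r ih =>
    intro k hk
    have hp1 : 1 < p := hp2'
    rcases Nat.eq_zero_or_pos k with rfl | hk0
    · simp
    rw [Nat.digits_def' hp1 hk0, List.sum_cons]
    have h1 : k / p < p ^ r := by
      rw [Nat.div_lt_iff_lt_mul (by omega)]
      calc k < p ^ (r + 1) := hk
      _ = p ^ r * p := pow_succ p r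
    have h2 := ih h1
    have h3 : k % p < p := Nat.mod_lt _ (by omega)
    have : (r + 1) * (p - 1) = r * (p - 1) + (p - 1) := by ring
    omega

private lemma digitSum_lt : ∀ (r : ℕ) {k : ℕ}, k < p ^ r - 1 →
    (Nat.digits p k).sum < r * (p - 1) := by
  intro r
  induction r with
  | zero => intro k hk; rw [pow_zero] at hk; omega
  | succ r ih =>
    intro k hk
    have hp1 : 1 < p := hp2'
    have hpr : 0 < p ^ r := Nat.pow_pos (by omega)
    have hpow : p ^ (r + 1) = p ^ r * p := pow_succ p r
    have harith : (r + 1) * (p - 1) = r * (p - 1) + (p - 1) := by ring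
    rcases Nat.eq_zero_or_pos k with rfl | hk0
    · simp only [Nat.digits_zero, List.sum_nil]
      have h1 : 1 ≤ p - 1 := by omega
      have : 1 ≤ (r + 1) * (p - 1) := by nlinarith
      omega
    rw [Nat.digits_def' hp1 hk0, List.sum_cons]
    have hmoddiv : k % p + p * (k / p) = k := Nat.mod_add_div k p
    have hdivlt : k / p < p ^ r := by
      rw [Nat.div_lt_iff_lt_mul (by omega : 0 < p)]
      omega
    have h3 : k % p < p := Nat.mod_lt _ (by omega)
    by_cases hcase : k % p = p - 1
    · have hdivlt' : k / p < p ^ r - 1 := by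
        by_contra hge
        push_neg at hge
        have h5 : (p ^ r - 1) * p ≤ (k / p) * p := Nat.mul_le_mul_right p hge
        have h6 : (p ^ r - 1) * p = p ^ r * p - 1 * p := Nat.sub_mul _ _ _
        have h7 : p * (k / p) = (k / p) * p := mul_comm _ _
        omega
      have := ih hdivlt'
      omega
    · have := digitSum_le r hdivlt
      omega

private lemma digitSum_ge {k : ℕ} (hk : 0 < k) (hdvd : (p - 1) ∣ k) :
    p - 1 ≤ (Nat.digits p k).sum := by
  rcases Nat.lt_or_ge p 3 with hp3 | hp3
  · have hp2 : 2 ≤ p := hp2'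
    have : p = 2 := by omega
    subst this
    have := digitSum_pos (p := 2) hk; omega
  · have hmod : p % (p - 1) = 1 := by
      rw [Nat.mod_eq_sub_mod (by omega : p - 1 ≤ p)]
      have h1 : p - (p - 1) = 1 := by omega
      rw [h1]
      exact Nat.mod_eq_of_lt (by omega)
    have hmodeq : k ≡ (Nat.digits p k).sum [MOD (p - 1)] :=
      Nat.modEq_digits_sum (p - 1) p hmod k
    have hdvdsum : (p - 1) ∣ (Nat.digits p k).sum := by
      have h0 : (Nat.digits p k).sum ≡ 0 [MOD (p - 1)] :=
        hmodeq.symm.trans ((Nat.modEq_zero_iff_dvd).2 hdvd)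
      exact (Nat.modEq_zero_iff_dvd).1 h0
    exact Nat.le_of_dvd (digitSum_pos hk) hdvdsum

private lemma choose_digitSum {k m : ℕ} (hk : k ≤ m) (h : ¬ p ∣ m.choose k) :
    (Nat.digits p k).sum + (Nat.digits p (m - k)).sum ≤ (Nat.digits p m).sum := by
  have h0 : padicValNat p (m.choose k) = 0 := padicValNat.eq_zero_of_not_dvd h
  have key := sub_one_mul_padicValNat_choose_eq_sub_sum_digits' (p := p) (k := k) (n := m - k)
  rw [Nat.sub_add_cancel hk] at key
  rw [h0, Nat.mul_zero] at key
  omega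

end NatAux

section ZModAux

variable {p : ℕ} [Fact p.Prime]

private lemma zmod_sum_pow {k : ℕ} (h : k = 0 ∨ ¬ (p - 1) ∣ k) :
    ∑ x : ZMod p, x ^ k = 0 := by
  rcases h with rfl | h
  · simp only [pow_zero, Finset.sum_const, Finset.card_univ, ZMod.card, nsmul_eq_mul, mul_one]
    exact ZMod.natCast_self p
  · have hk0 : k ≠ 0 := by rintro rfl; exact h (dvd_zero _)
    classical
    have key := FiniteField.sum_pow_units (ZMod p) k
    rw [ZMod.card, if_neg h] at key
    have split : ∑ x ∈ (Finset.univ : Finset (ZMod p)).erase 0, x ^ k + (0 : ZMod p) ^ k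
        = ∑ x : ZMod p, x ^ k := Finset.sum_erase_add _ _ (Finset.mem_univ 0)
    have hzero : (0 : ZMod p) ^ k = 0 := zero_pow hk0
    have hunits : ∑ x ∈ (Finset.univ : Finset (ZMod p)).erase 0, x ^ k
        = ∑ x : (ZMod p)ˣ, (x : ZMod p) ^ k := by
      rw [Finset.sum_subtype (p := fun x : ZMod p => x ≠ 0)
        ((Finset.univ : Finset (ZMod p)).erase 0) (fun x => by simp) (fun x => x ^ k)]
      rw [← Equiv.sum_comp (unitsEquivNeZero (G₀ := ZMod p))
        (fun x : {x : ZMod p // x ≠ 0} => (x : ZMod p) ^ k)]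
      rfl
    rw [← split, hzero, add_zero, hunits, key]

end ZModAux

section SumPow

variable {p : ℕ} [Fact p.Prime] {B : Type*} [CommRing B] [Algebra (ZMod p) B] [CharP B p]

private lemma sum_pow_smul_eq_zero :
    ∀ (r : ℕ) (e : Fin r → B) (m : ℕ), (Nat.digits p m).sum < r * (p - 1) →
    ∑ c : Fin r → ZMod p, (∑ j, c j • e j) ^ m = 0 := by
  intro r
  induction r with
  | zero => intro e m hm; simp at hm
  | succ r ih =>
    intro e m hm
    rw [← Equiv.sum_comp (Fin.consEquiv (fun _ : Fin (r + 1) => ZMod p))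
      (fun c : Fin (r + 1) → ZMod p => (∑ j, c j • e j) ^ m)]
    rw [Fintype.sum_prod_type]
    have hbody : ∀ (x : ZMod p) (c' : Fin r → ZMod p),
        (∑ j, (Fin.consEquiv (fun _ : Fin (r + 1) => ZMod p)) (x, c') j • e j)
          = x • e 0 + ∑ j, c' j • e (Fin.succ j) := by
      intro x c'
      rw [Fin.sum_univ_succ]
      simp [Fin.consEquiv]
    simp only [hbody]
    rw [Finset.sum_comm]
    have inner : ∀ c' : Fin r → ZMod p,
        ∑ x : ZMod p, (x • e 0 + ∑ j, c' j • e (Fin.succ j)) ^ m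
        = ∑ k ∈ Finset.range (m + 1),
            ((∑ x : ZMod p, x ^ k) • e 0 ^ k) * (∑ j, c' j • e (Fin.succ j)) ^ (m - k)
              * (m.choose k : B) := by
      intro c'
      have hx : ∀ x : ZMod p, (x • e 0 + ∑ j, c' j • e (Fin.succ j)) ^ m
          = ∑ k ∈ Finset.range (m + 1),
              (x ^ k • e 0 ^ k) * (∑ j, c' j • e (Fin.succ j)) ^ (m - k) * (m.choose k : B) := by
        intro x
        rw [add_pow]
        exact Finset.sum_congr rfl fun k _ => by rw [_root_.smul_pow]
      simp only [hx]
      rw [Finset.sum_comm]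
      refine Finset.sum_congr rfl fun k _ => ?_
      rw [← Finset.sum_mul, ← Finset.sum_mul, ← Finset.sum_smul]
    simp only [inner]
    rw [Finset.sum_comm]
    refine Finset.sum_eq_zero fun k hk => ?_
    have hkm : k ≤ m := by
      simp only [Finset.mem_range] at hk; omega
    by_cases hcase : k = 0 ∨ ¬ (p - 1) ∣ k
    · refine Finset.sum_eq_zero fun c' _ => ?_
      rw [zmod_sum_pow hcase, zero_smul, zero_mul, zero_mul]
    · push_neg at hcase
      obtain ⟨hk0, hdvd⟩ := hcase
      by_cases hC : p ∣ m.choose k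
      · refine Finset.sum_eq_zero fun c' _ => ?_
        rw [(CharP.cast_eq_zero_iff B p _).2 hC, mul_zero]
      · have h1 : p - 1 ≤ (Nat.digits p k).sum := digitSum_ge (Nat.pos_of_ne_zero hk0) hdvd
        have h2 := choose_digitSum hkm hC
        have h3 : (Nat.digits p (m - k)).sum < r * (p - 1) := by
          have harith : (r + 1) * (p - 1) = r * (p - 1) + (p - 1) := by ring
          omega
        have h4 := ih (fun j => e (Fin.succ j)) (m - k) h3
        rw [← Finset.sum_mul, ← Finset.mul_sum, h4, mul_zero, zero_mul]

end SumPow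

open Polynomial Finset

section KeySum

variable {p : ℕ} [Fact p.Prime] {A : Type*} [CommRing A] [IsDomain A] [Algebra (ZMod p) A]

private lemma charPA : CharP A p :=
  charP_of_injective_algebraMap (algebraMap (ZMod p) A).injective p

omit [IsDomain A] in
private lemma sum_coe_pow (E : Submodule (ZMod p) A) [Fintype E] {r : ℕ}
    (b : Module.Basis (Fin r) (ZMod p) E) (k : ℕ) :
    ∑ u : E, ((u : A)) ^ k = ∑ c : Fin r → ZMod p, (∑ j, c j • ((b j : A))) ^ k := by
  rw [← Equiv.sum_comp b.equivFun.symm.toEquiv (fun u : E => ((u : A)) ^ k)]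
  refine Finset.sum_congr rfl fun c _ => ?_
  congr 1
  rw [LinearEquiv.coe_toEquiv, Module.Basis.equivFun_symm_apply]
  push_cast
  rfl

private lemma sum_pow_card_sub_one_ne_zero (E : Submodule (ZMod p) A) [Fintype E] {r : ℕ}
    (hr : Module.finrank (ZMod p) E = r) :
    ∑ u : E, ((u : A)) ^ (p ^ r - 1) ≠ 0 := by
  haveI := charPA (p := p) (A := A)
  haveI : Module.Finite (ZMod p) E := Module.Finite.of_finite
  have hp1 : 1 < p := (Fact.out : p.Prime).one_lt
  rcases Nat.eq_zero_or_pos r with rfl | hr0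
  · haveI : Subsingleton E := by
      rw [← Module.finrank_zero_iff (R := ZMod p) (M := E)]; exact hr
    haveI : Unique E := uniqueOfSubsingleton 0
    simp only [pow_zero, Nat.sub_self]
    rw [Fintype.sum_unique]
    simp
  -- main case
  subst hr
  set r := Module.finrank (ZMod p) E with hrdef
  have hcard : Fintype.card E = p ^ r := by
    rw [Module.card_eq_pow_finrank (K := ZMod p) (V := E), ZMod.card]
  have hq1 : 1 < p ^ r := by
    calc 1 < p := hp1
    _ ≤ p ^ r := Nat.le_self_pow (by omega) p
  classical
  set S : Finset E := Finset.univ.erase 0 with hS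
  have hScard : S.card = p ^ r - 1 := by
    rw [hS, Finset.card_erase_of_mem (Finset.mem_univ 0), Finset.card_univ, hcard]
  set g : Polynomial A := ∏ v ∈ S, (X - C ((v : A))) with hg
  have hmonic : g.Monic := monic_prod_of_monic _ _ fun v _ => monic_X_sub_C _
  have hdeg : g.natDegree = p ^ r - 1 := by
    rw [hg, natDegree_prod_of_monic _ _ fun v _ => monic_X_sub_C _]
    simp [hScard]
  have hsplit : ∑ u : E, ((u : A)) ^ (p ^ r - 1) = ∑ u ∈ S, ((u : A)) ^ (p ^ r - 1) := by
    rw [← Finset.sum_erase_add _ _ (Finset.mem_univ (0 : E))]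
    have : (((0 : E) : A)) ^ (p ^ r - 1) = 0 := by
      rw [ZeroMemClass.coe_zero, zero_pow (by omega)]
    rw [this, add_zero]
  have hroot : ∀ u ∈ S, ((u : A)) ^ (p ^ r - 1)
      = - ∑ k ∈ Finset.range (p ^ r - 1), g.coeff k * ((u : A)) ^ k := by
    intro u hu
    have hev : g.eval ((u : A)) = 0 := by
      rw [hg, eval_prod]
      refine Finset.prod_eq_zero hu ?_
      simp
    have hlead : g.coeff (p ^ r - 1) = 1 := by
      have := hmonic.coeff_natDegree
      rwa [hdeg] at this
    have heval := eval_eq_sum_range (p := g) ((u : A))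
    rw [hdeg, Finset.sum_range_succ, hlead, one_mul, hev] at heval
    exact eq_neg_of_add_eq_zero_right heval.symm
  -- the vanishing of intermediate power sums
  have hT : ∀ k : ℕ, 0 < k → k < p ^ r - 1 → ∑ u ∈ S, ((u : A)) ^ k = 0 := by
    intro k hk0 hklt
    have hzk : (((0 : E) : A)) ^ k = 0 := by
      rw [ZeroMemClass.coe_zero, zero_pow (by omega)]
    have h1 : ∑ u ∈ S, ((u : A)) ^ k = ∑ u : E, ((u : A)) ^ k := by
      rw [← Finset.sum_erase_add _ _ (Finset.mem_univ (0 : E)), hzk, add_zero]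
    rw [h1, sum_coe_pow E (Module.finBasis (ZMod p) E)]
    exact sum_pow_smul_eq_zero r _ k (digitSum_lt r hklt)
  have hT0 : ∑ u ∈ S, ((u : A)) ^ 0 = -1 := by
    simp only [pow_zero, Finset.sum_const, nsmul_eq_mul, mul_one, hScard]
    have hcast : ((p ^ r - 1 : ℕ) : A) = ((p ^ r : ℕ) : A) - 1 := by
      rw [Nat.cast_sub (by omega)]; simp
    rw [hcast]
    have : ((p ^ r : ℕ) : A) = 0 := by
      push_cast
      rw [CharP.cast_eq_zero A p, zero_pow (by omega)]
    rw [this, zero_sub]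
  have main : ∑ u : E, ((u : A)) ^ (p ^ r - 1) = g.coeff 0 := by
    rw [hsplit, Finset.sum_congr rfl hroot, Finset.sum_neg_distrib, Finset.sum_comm]
    rw [show (∑ k ∈ Finset.range (p ^ r - 1), ∑ u ∈ S, g.coeff k * ((u : A)) ^ k)
        = ∑ k ∈ Finset.range (p ^ r - 1), g.coeff k * ∑ u ∈ S, ((u : A)) ^ k from
      Finset.sum_congr rfl fun k _ => (Finset.mul_sum _ _ _).symm]
    rw [Finset.sum_eq_single_of_mem 0 (Finset.mem_range.2 (by omega))
      (fun k hk hkne => by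
        rw [hT k (Nat.pos_of_ne_zero hkne) (Finset.mem_range.1 hk), mul_zero])]
    rw [hT0, mul_neg_one, neg_neg]
  rw [main]
  rw [coeff_zero_eq_eval_zero, hg, eval_prod]
  refine Finset.prod_ne_zero_iff.2 fun v hv => ?_
  simp only [eval_sub, eval_X, eval_C, zero_sub]
  exact neg_ne_zero.2 fun h0 => (Finset.ne_of_mem_erase hv) (ZeroMemClass.coe_eq_zero.mp h0)

end KeySum

open Polynomial Finset

section GroupAlg

variable {p : ℕ} [Fact p.Prime] {A : Type*} [CommRing A] [Algebra (ZMod p) A]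

/-- The shift `f(t) ↦ f(t+w)` as a `ZMod p`-linear endomorphism of `A[t]`. -/
noncomputable def shEnd (w : A) : Module.End (ZMod p) (Polynomial A) where
  toFun f := f.comp (X + C w)
  map_add' f g := add_comp
  map_smul' s f := by simp [smul_comp]

@[simp] lemma shEnd_apply (w : A) (f : Polynomial A) :
    shEnd (p := p) w f = f.comp (X + C w) := rfl

variable (E : Submodule (ZMod p) A)

/-- The shift action of `E` on `A[t]`, as a monoid hom. -/
noncomputable def sigmaE : Multiplicative E →* Module.End (ZMod p) (Polynomial A) where
  toFun u := shEnd ((u.toAdd : E) : A)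
  map_one' := by
    apply LinearMap.ext; intro f
    show f.comp (X + C ((((1 : Multiplicative E).toAdd : E)) : A)) = f
    simp
  map_mul' u v := by
    apply LinearMap.ext; intro f
    show f.comp (X + C (((u.toAdd + v.toAdd : E)) : A))
      = (f.comp (X + C ((v.toAdd : E) : A))).comp (X + C ((u.toAdd : E) : A))
    rw [comp_assoc]
    congr 1
    simp only [add_comp, X_comp, C_comp, Submodule.coe_add]
    rw [C_add]
    ring

/-- The induced algebra map from the group algebra of `E`. -/
noncomputable def rhoE :
    MonoidAlgebra (ZMod p) (Multiplicative E) →ₐ[ZMod p] Module.End (ZMod p) (Polynomial A) :=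
  MonoidAlgebra.lift _ _ _ (sigmaE E)

/-- The group element `u` inside the group algebra. -/
noncomputable def gE (u : E) : MonoidAlgebra (ZMod p) (Multiplicative E) :=
  MonoidAlgebra.single (Multiplicative.ofAdd u) 1

lemma rhoE_gE (u : E) (f : Polynomial A) :
    rhoE E (gE E u) f = f.comp (X + C ((u : A))) := by
  rw [gE, rhoE, MonoidAlgebra.lift_single, one_smul]
  rfl

lemma gE_mul (u v : E) : gE E u * gE E v = gE E (u + v) := by
  rw [gE, gE, gE, MonoidAlgebra.single_mul_single, one_mul]
  rfl

lemma gE_pow (u : E) (n : ℕ) : gE E u ^ n = gE E (n • u) := by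
  rw [gE, gE, MonoidAlgebra.single_pow, one_pow]
  rfl

lemma gE_zero : gE E 0 = 1 := rfl

lemma charP_MA : CharP (MonoidAlgebra (ZMod p) (Multiplicative E)) p := by
  apply charP_of_injective_algebraMap (R := ZMod p)
  intro x y hxy
  rw [MonoidAlgebra.coe_algebraMap] at hxy
  simpa using hxy

lemma gE_sub_one_pow_p (u : E) : (gE E u - 1) ^ p = 0 := by
  haveI := charP_MA (p := p) E
  rw [sub_pow_char, one_pow, gE_pow]
  have hps : (p : ℕ) • u = 0 := by
    rw [← Nat.cast_smul_eq_nsmul (ZMod p), ZMod.natCast_self, zero_smul]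
  rw [hps, gE_zero, sub_self]

end GroupAlg

section IdealAux

variable {S : Type*} [CommRing S]

private lemma pow_sub_one_mem (J : Ideal S) {x : S} (hx : x - 1 ∈ J) :
    ∀ n : ℕ, x ^ n - 1 ∈ J := by
  intro n
  induction n with
  | zero => simp
  | succ n ih =>
    have h : x ^ (n + 1) - 1 = x ^ n * (x - 1) + (x ^ n - 1) := by ring
    rw [h]
    exact add_mem (Ideal.mul_mem_left _ _ hx) ih

private lemma sup_pow_sharp (I J : Ideal S) (n m : ℕ) :
    (I ⊔ J) ^ (n + m + 1) ≤ I ^ (n + 1) ⊔ J ^ (m + 1) := by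
  rw [← Ideal.add_eq_sup, ← Ideal.add_eq_sup, add_pow, Ideal.sum_eq_sup]
  apply Finset.sup_le
  intro i hi
  by_cases hn : n + 1 ≤ i
  · exact Ideal.mul_le_left.trans (Ideal.mul_le_left.trans
      ((Ideal.pow_le_pow_right hn).trans le_sup_left))
  · refine Ideal.mul_le_left.trans (Ideal.mul_le_right.trans
      ((Ideal.pow_le_pow_right ?_).trans le_sup_right))
    simp only [Finset.mem_range] at hi
    omega

private lemma prod_mem_ideal_pow (J : Ideal S) :
    ∀ (n : ℕ) (y : Fin n → S), (∀ i, y i ∈ J) → ∏ i, y i ∈ J ^ n := by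
  intro n
  induction n with
  | zero => intro y hy; simp [Ideal.one_eq_top]
  | succ n ih =>
    intro y hy
    rw [Fin.prod_univ_succ, pow_succ']
    exact Ideal.mul_mem_mul (hy 0) (ih _ fun i => hy i.succ)

private lemma span_nilpotent_pow {p : ℕ} (hp : 1 ≤ p) :
    ∀ (n : ℕ) (x : Fin n → S), (∀ j, x j ^ p = 0) →
    (Ideal.span (Set.range x)) ^ (n * (p - 1) + 1) = ⊥ := by
  intro n
  induction n with
  | zero =>
    intro x hx
    rw [Set.range_eq_empty, Ideal.span_empty]
    simp
  | succ n ih =>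
    intro x hx
    have hr : Set.range x = insert (x 0) (Set.range (fun j : Fin n => x j.succ)) := by
      conv_lhs => rw [← Fin.cons_self_tail x]
      rw [Fin.range_cons]
      rfl
    rw [hr, Ideal.span_insert]
    have hexp : (n + 1) * (p - 1) + 1 = (p - 1) + n * (p - 1) + 1 := by ring
    rw [hexp]
    refine le_bot_iff.1 ?_
    calc (Ideal.span {x 0} ⊔ Ideal.span (Set.range fun j : Fin n => x j.succ))
          ^ ((p - 1) + n * (p - 1) + 1)
        ≤ (Ideal.span {x 0}) ^ ((p - 1) + 1)
            ⊔ (Ideal.span (Set.range fun j : Fin n => x j.succ)) ^ (n * (p - 1) + 1) :=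
          sup_pow_sharp _ _ _ _
      _ = ⊥ := by
          rw [ih _ fun j => hx j.succ]
          rw [show p - 1 + 1 = p from by omega]
          rw [Ideal.span_singleton_pow, hx 0]
          simp

end IdealAux

open Polynomial Finset

section GroupAlg2

variable {p : ℕ} [Fact p.Prime] {A : Type*} [CommRing A] [Algebra (ZMod p) A]
variable (E : Submodule (ZMod p) A)

private lemma choose_zmod : ∀ k ≤ p - 1, (((p - 1).choose k : ℕ) : ZMod p) = (-1) ^ k := by
  intro k
  induction k with
  | zero => intro _; simp
  | succ k ih =>
    intro hk1
    have hp1 : 1 ≤ p := (Fact.out : p.Prime).one_lt.le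
    have hk : k ≤ p - 1 := by omega
    have hrec := Nat.choose_succ_right_eq (p - 1) k
    have hsub : (((p - 1) - k : ℕ) : ZMod p) = -1 - (k : ZMod p) := by
      rw [Nat.cast_sub hk, Nat.cast_sub hp1, ZMod.natCast_self]
      push_cast
      ring
    have hcast : (((p - 1).choose (k + 1) : ℕ) : ZMod p) * ((k + 1 : ℕ) : ZMod p)
        = (((p - 1).choose k : ℕ) : ZMod p) * (((p - 1) - k : ℕ) : ZMod p) := by
      rw [← Nat.cast_mul, ← Nat.cast_mul, hrec]
    rw [ih hk, hsub] at hcast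
    have hne : ((k + 1 : ℕ) : ZMod p) ≠ 0 := by
      rw [Ne, ZMod.natCast_eq_zero_iff]
      intro hdvd
      have := Nat.le_of_dvd (by omega) hdvd
      omega
    have heq : (((p - 1).choose (k + 1) : ℕ) : ZMod p) * ((k + 1 : ℕ) : ZMod p)
        = (-1) ^ (k + 1) * ((k + 1 : ℕ) : ZMod p) := by
      rw [hcast]
      push_cast
      ring
    exact mul_right_cancel₀ hne heq

private lemma gE_sub_one_mem {r : ℕ} (b : Module.Basis (Fin r) (ZMod p) E) (u : E) :
    gE E u - 1 ∈ Ideal.span (Set.range fun j => gE E (b j) - 1) := by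
  have hu : u ∈ Submodule.span (ZMod p) (Set.range b) := by
    rw [b.span_eq]; trivial
  induction hu using Submodule.span_induction with
  | mem v hv => obtain ⟨j, rfl⟩ := hv; exact Ideal.subset_span ⟨j, rfl⟩
  | zero => rw [gE_zero]; simp
  | add v w hv hw ihv ihw =>
    have h : gE E (v + w) - 1 = (gE E v - 1) * gE E w + (gE E w - 1) := by
      rw [← gE_mul]; ring
    rw [h]
    exact add_mem (Ideal.mul_mem_right _ _ ihv) ihw
  | smul c v hv ihv =>
    have h1 : gE E (c • v) = gE E v ^ c.val := by
      rw [gE_pow]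
      congr 1
      rw [← Nat.cast_smul_eq_nsmul (ZMod p) c.val v, ZMod.natCast_rightInverse c]
    rw [h1]
    exact pow_sub_one_mem _ ihv c.val

private lemma prod_gE_sub_one_eq_zero {r : ℕ} (b : Module.Basis (Fin r) (ZMod p) E)
    (u : Fin (r * (p - 1) + 1) → E) :
    ∏ i, (gE E (u i) - 1) = 0 := by
  have hp1 : 1 ≤ p := (Fact.out : p.Prime).one_lt.le
  have h1 := prod_mem_ideal_pow (Ideal.span (Set.range fun j => gE E (b j) - 1)) _ _
    (fun i => gE_sub_one_mem E b (u i))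
  rw [span_nilpotent_pow hp1 r _ (fun j => gE_sub_one_pow_p E (b j))] at h1
  exact Ideal.mem_bot.1 h1

private lemma one_sub_gE_pow (v : E) :
    (1 - gE E v) ^ (p - 1) = ∑ k ∈ Finset.range p, gE E v ^ k := by
  have hp1 : 1 ≤ p := (Fact.out : p.Prime).one_lt.le
  rw [sub_eq_add_neg, add_pow]
  rw [show p - 1 + 1 = p from by omega]
  rw [← Finset.sum_range_reflect]
  refine Finset.sum_congr rfl fun k hk => ?_
  rw [Finset.mem_range] at hk
  have hk1 : k ≤ p - 1 := by omega
  have h1 : p - 1 - (p - 1 - k) = k := by omega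
  rw [one_pow, one_mul, h1, Nat.choose_symm hk1, neg_pow]
  have hc : (((p - 1).choose k : ℕ) : MonoidAlgebra (ZMod p) (Multiplicative E))
      = algebraMap (ZMod p) _ ((-1 : ZMod p) ^ k) := by
    rw [← choose_zmod (p := p) k hk1, map_natCast]
  have hm : ((-1 : MonoidAlgebra (ZMod p) (Multiplicative E))) ^ k
      = algebraMap (ZMod p) _ ((-1 : ZMod p) ^ k) := by
    rw [map_pow, map_neg, map_one]
  rw [hc, hm]
  rw [show algebraMap (ZMod p) (MonoidAlgebra (ZMod p) (Multiplicative E)) ((-1 : ZMod p) ^ k)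
        * gE E v ^ k
        * algebraMap (ZMod p) (MonoidAlgebra (ZMod p) (Multiplicative E)) ((-1 : ZMod p) ^ k)
      = (algebraMap (ZMod p) (MonoidAlgebra (ZMod p) (Multiplicative E))
          ((-1 : ZMod p) ^ k * (-1 : ZMod p) ^ k)) * gE E v ^ k from by rw [map_mul]; ring]
  rw [← mul_pow, neg_mul_neg, one_mul, one_pow, map_one, one_mul]

private lemma sum_gE_pow (v : E) :
    ∑ k ∈ Finset.range p, gE E v ^ k = ∑ x : ZMod p, gE E (x • v) := by
  have hp0 : 0 < p := (Fact.out : p.Prime).pos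
  simp only [gE_pow]
  refine Finset.sum_nbij' (i := fun k => ((k : ZMod p))) (j := fun x => x.val)
    (fun k hk => Finset.mem_univ _) (fun x _ => Finset.mem_range.2 (ZMod.val_lt x))
    (fun k hk => ZMod.val_natCast_of_lt (Finset.mem_range.1 hk))
    (fun x _ => ZMod.natCast_rightInverse x) (fun k hk => ?_)
  congr 1
  rw [Nat.cast_smul_eq_nsmul]

private lemma gE_sum {ι : Type*} [DecidableEq ι] (s : Finset ι) (v : ι → E) :
    ∏ j ∈ s, gE E (v j) = gE E (∑ j ∈ s, v j) := by
  induction s using Finset.cons_induction with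
  | empty => simp [gE_zero]
  | cons i s his ih =>
    rw [Finset.prod_cons, Finset.sum_cons, ih, gE_mul]

private lemma prod_identity {r : ℕ} [Fintype E] (b : Module.Basis (Fin r) (ZMod p) E) :
    ∏ j : Fin r, (1 - gE E (b j)) ^ (p - 1) = ∑ u : E, gE E u := by
  calc ∏ j : Fin r, (1 - gE E (b j)) ^ (p - 1)
      = ∏ j : Fin r, ∑ x : ZMod p, gE E (x • b j) := by
        refine Finset.prod_congr rfl fun j _ => ?_
        rw [one_sub_gE_pow, sum_gE_pow]
    _ = ∑ c ∈ Fintype.piFinset (fun _ : Fin r => (Finset.univ : Finset (ZMod p))),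
          ∏ j, gE E (c j • b j) := Finset.prod_univ_sum _ _
    _ = ∑ c : Fin r → ZMod p, ∏ j, gE E (c j • b j) := by rw [Fintype.piFinset_univ]
    _ = ∑ c : Fin r → ZMod p, gE E (∑ j, c j • b j) := by
        refine Finset.sum_congr rfl fun c _ => ?_
        rw [gE_sum]
    _ = ∑ u : E, gE E u := by
        rw [← Equiv.sum_comp b.equivFun.symm.toEquiv (fun u : E => gE E u)]
        refine Finset.sum_congr rfl fun c _ => ?_
        congr 1
        rw [LinearEquiv.coe_toEquiv, Module.Basis.equivFun_symm_apply]

private lemma prod_one_sub_gE_eq_zero {r : ℕ} (b : Module.Basis (Fin r) (ZMod p) E)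
    (u : Fin (r * (p - 1) + 1) → E) :
    ∏ i, (1 - gE E (u i)) = 0 := by
  have hp1 : 1 ≤ p := (Fact.out : p.Prime).one_lt.le
  have h1 := prod_mem_ideal_pow (Ideal.span (Set.range fun j => gE E (b j) - 1)) _ _
    (fun i => by
      have hmem := neg_mem (gE_sub_one_mem E b (u i))
      rw [neg_sub] at hmem
      exact hmem)
  rw [span_nilpotent_pow hp1 r _ (fun j => gE_sub_one_pow_p E (b j))] at h1
  exact Ideal.mem_bot.1 h1

end GroupAlg2

open scoped commutatorElement

section BigGroupAux

variable {A : Type*} [CommRing A]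

private lemma toAdd_left_mul (x y : bigGroup A) :
    (x * y).left.toAdd = x.left.toAdd + (y.left.toAdd).comp (X + C x.right.toAdd) := rfl

private lemma toAdd_left_inv (x : bigGroup A) :
    (x⁻¹).left.toAdd = -((x.left.toAdd).comp (X + C (-x.right.toAdd))) := by
  rw [SemidirectProduct.inv_left]
  show ((x.left⁻¹).toAdd).comp (X + C ((x.right⁻¹).toAdd)) = _
  rw [toAdd_inv, toAdd_inv, neg_comp]

private lemma comp_comp (f : Polynomial A) (u v : A) :
    (f.comp (X + C u)).comp (X + C v) = f.comp (X + C (v + u)) := by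
  rw [comp_assoc]
  congr 1
  rw [add_comp, X_comp, C_comp, C_add]
  ring

private lemma bigGroup_commutator (x y : bigGroup A) :
    ⁅x, y⁆ = SemidirectProduct.inl (Multiplicative.ofAdd
      (((y.left.toAdd).comp (X + C x.right.toAdd) - y.left.toAdd)
        - ((x.left.toAdd).comp (X + C y.right.toAdd) - x.left.toAdd))) := by
  have hcomm : ∀ a b : Multiplicative A, a * b * a⁻¹ * b⁻¹ = 1 := by
    intro a b; rw [mul_comm a b]; group
  have comp_XC0 : ∀ f : Polynomial A, f.comp (X + C (0 : A)) = f := by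
    intro f; simp
  apply SemidirectProduct.ext
  · -- left components
    apply Multiplicative.toAdd.injective
    rw [commutatorElement_def]
    rw [toAdd_left_mul, toAdd_left_mul, toAdd_left_mul]
    rw [toAdd_left_inv, toAdd_left_inv]
    simp only [SemidirectProduct.mul_right, SemidirectProduct.inv_right, toAdd_mul, toAdd_inv,
      SemidirectProduct.left_inl, toAdd_ofAdd]
    simp only [neg_comp, comp_comp]
    have e1 : x.right.toAdd + y.right.toAdd + -x.right.toAdd = y.right.toAdd := by ring
    have e2 : y.right.toAdd + -y.right.toAdd = 0 := by ring
    rw [e1, e2, comp_XC0]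
    abel
  · rw [commutatorElement_def]
    simp only [SemidirectProduct.mul_right, SemidirectProduct.inv_right,
      SemidirectProduct.right_inl]
    exact hcomm _ _

end BigGroupAux

section Sub

variable {p : ℕ} [Fact p.Prime] {A : Type*} [CommRing A] [Algebra (ZMod p) A]

private lemma comp_XC0' (f : Polynomial A) : f.comp (X + C (0 : A)) = f := by simp

/-- The subgroup `E ⋉ M₀` of the big group. -/
private def Kgrp (E : Submodule (ZMod p) A) (M₀ : AddSubgroup (Polynomial A))
    (hM : ∀ u ∈ E, ∀ f ∈ M₀, f.comp (X + C u) ∈ M₀) : Subgroup (bigGroup A) where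
  carrier := {x | x.left.toAdd ∈ M₀ ∧ x.right.toAdd ∈ E}
  one_mem' := by
    refine ⟨?_, ?_⟩
    · show (1 : bigGroup A).left.toAdd ∈ M₀
      rw [SemidirectProduct.one_left, toAdd_one]
      exact zero_mem _
    · show (1 : bigGroup A).right.toAdd ∈ E
      rw [SemidirectProduct.one_right, toAdd_one]
      exact zero_mem _
  mul_mem' {x y} hx hy := by
    refine ⟨?_, ?_⟩
    · show (x * y).left.toAdd ∈ M₀
      rw [toAdd_left_mul]
      exact add_mem hx.1 (hM _ hx.2 _ hy.1)
    · show (x * y).right.toAdd ∈ E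
      rw [SemidirectProduct.mul_right, toAdd_mul]
      exact add_mem hx.2 hy.2
  inv_mem' {x} hx := by
    refine ⟨?_, ?_⟩
    · show (x⁻¹).left.toAdd ∈ M₀
      rw [toAdd_left_inv]
      exact neg_mem (hM _ (neg_mem hx.2) _ hx.1)
    · show (x⁻¹).right.toAdd ∈ E
      rw [SemidirectProduct.inv_right, toAdd_inv]
      exact neg_mem hx.2

private lemma mem_Kgrp {E : Submodule (ZMod p) A} {M₀ : AddSubgroup (Polynomial A)}
    {hM : ∀ u ∈ E, ∀ f ∈ M₀, f.comp (X + C u) ∈ M₀} {x : bigGroup A} :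
    x ∈ Kgrp E M₀ hM ↔ x.left.toAdd ∈ M₀ ∧ x.right.toAdd ∈ E := Iff.rfl

/-- The subgroup `1 ⋉ W` of the big group. -/
private def DWgrp (W : AddSubgroup (Polynomial A)) : Subgroup (bigGroup A) where
  carrier := {x | x.right = 1 ∧ x.left.toAdd ∈ W}
  one_mem' := by
    refine ⟨SemidirectProduct.one_right, ?_⟩
    show (1 : bigGroup A).left.toAdd ∈ W
    rw [SemidirectProduct.one_left, toAdd_one]
    exact zero_mem _
  mul_mem' {x y} hx hy := by
    refine ⟨?_, ?_⟩
    · rw [SemidirectProduct.mul_right, hx.1, hy.1, one_mul]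
    · show (x * y).left.toAdd ∈ W
      rw [toAdd_left_mul, hx.1, toAdd_one, comp_XC0']
      exact add_mem hx.2 hy.2
  inv_mem' {x} hx := by
    refine ⟨?_, ?_⟩
    · rw [SemidirectProduct.inv_right, hx.1, inv_one]
    · show (x⁻¹).left.toAdd ∈ W
      rw [toAdd_left_inv, hx.1, toAdd_one, neg_zero, comp_XC0']
      exact neg_mem hx.2

private lemma mem_DWgrp {W : AddSubgroup (Polynomial A)} {x : bigGroup A} :
    x ∈ DWgrp W ↔ x.right = 1 ∧ x.left.toAdd ∈ W := Iff.rfl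

private lemma rhoE_one_sub (E : Submodule (ZMod p) A) (w : E) (f : Polynomial A) :
    rhoE E (1 - gE E w) f = f - f.comp (X + C ((w : A))) := by
  rw [map_sub, map_one, LinearMap.sub_apply, Module.End.one_apply, rhoE_gE]

private lemma mem_closure_map {S T : Set (Polynomial A)}
    (f : Module.End (ZMod p) (Polynomial A))
    (h : ∀ s ∈ S, f s ∈ AddSubgroup.closure T) {x : Polynomial A}
    (hx : x ∈ AddSubgroup.closure S) : f x ∈ AddSubgroup.closure T := by
  have hle : AddSubgroup.closure S ≤ (AddSubgroup.closure T).comap f.toAddMonoidHom :=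
    (AddSubgroup.closure_le _).2 h
  exact hle hx

end Sub


section

variable {A : Type*} [CommRing A]

/-- Let `p` be a prime, `A` an entire (prime) commutative `𝔽_p`-algebra,
`I ⊆ A` a proper nonzero ideal, `a ∈ I` nonzero, and `E ⊆ I` an `𝔽_p`-subspace of
dimension `r`.  Let `M ⊆ I[t]` be the additive subgroup generated by the polynomials
`f(t+u) = a(t+u)^{pʳ-1}` for `u ∈ E`.  Then the subgroup `E ⋉ M` of `G(I) = I ⋉ I[t]`
is nilpotent of nilpotency class exactly `1 + r(p-1)`. -/
theorem nilpotencyClass_semidirect_translates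
    {p : ℕ} [Fact p.Prime] [IsDomain A] [Algebra (ZMod p) A]
    (I : Ideal A) (hI0 : I ≠ ⊥) (hI1 : I ≠ ⊤)
    (a : A) (haI : a ∈ I) (ha : a ≠ 0)
    (E : Submodule (ZMod p) A) (hEI : (E : Set A) ⊆ (I : Set A))
    [Fintype E] {r : ℕ} (hr : Module.finrank (ZMod p) E = r)
    (H : Subgroup (bigGroup A))
    (hH : H = Subgroup.closure
      ((⇑(SemidirectProduct.inr :
          Multiplicative A →* bigGroup A) '' (⇑Multiplicative.ofAdd '' (E : Set A))) ∪
       (⇑(SemidirectProduct.inl :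
          Multiplicative (Polynomial A) →* bigGroup A) ''
        ((fun u : A => Multiplicative.ofAdd (C a * (X + C u) ^ (p ^ r - 1))) ''
          (E : Set A))))) :
    (⊤ : Subgroup ↥H).lowerCentralSeries (1 + r * (p - 1)) = ⊥ ∧
    (⊤ : Subgroup ↥H).lowerCentralSeries (r * (p - 1)) ≠ ⊥ := by
  classical
  haveI : Module.Finite (ZMod p) E := Module.Finite.of_finite
  let b : Module.Basis (Fin r) (ZMod p) E := (Module.finBasis (ZMod p) E).reindex (finCongr hr)
  -- the additive subgroup M₀
  set M₀ : AddSubgroup (Polynomial A) := AddSubgroup.closure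
    ((fun u : A => C a * (X + C u) ^ (p ^ r - 1)) '' (E : Set A)) with hM₀
  have hM₀stab : ∀ u ∈ E, ∀ f ∈ M₀, f.comp (X + C u) ∈ M₀ := by
    intro u hu f hf
    refine mem_closure_map (shEnd (p := p) u) ?_ hf
    rintro s ⟨v, hv, rfl⟩
    refine AddSubgroup.subset_closure ⟨v + u, E.add_mem hv hu, ?_⟩
    show C a * (X + C (v + u)) ^ (p ^ r - 1) = (C a * (X + C v) ^ (p ^ r - 1)).comp (X + C u)
    rw [mul_comp, C_comp, pow_comp, add_comp, X_comp, C_comp, C_add]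
    ring
  -- the descending sequence of subgroups of polynomials
  set W : ℕ → AddSubgroup (Polynomial A) := fun k => AddSubgroup.closure
    {f | ∃ (u : Fin k → E) (v : E),
      f = rhoE E (∏ i, (1 - gE E (u i))) (C a * (X + C ((v : A))) ^ (p ^ r - 1))} with hWdef
  have hWstep : ∀ (w : E) (k : ℕ), ∀ f ∈ W k, rhoE E (1 - gE E w) f ∈ W (k + 1) := by
    intro w k f hf
    refine mem_closure_map (rhoE E (1 - gE E w)) ?_ hf
    rintro s ⟨u, v, rfl⟩
    refine AddSubgroup.subset_closure ⟨Fin.cons w u, v, ?_⟩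
    rw [← Module.End.mul_apply, ← map_mul]
    congr 2
    rw [Fin.prod_univ_succ]
    simp only [Fin.cons_zero, Fin.cons_succ]
  have hW0 : ∀ (w : E), ∀ f ∈ M₀, rhoE E (1 - gE E w) f ∈ W 1 := by
    intro w f hf
    refine mem_closure_map (rhoE E (1 - gE E w)) ?_ hf
    rintro s ⟨v, hv, rfl⟩
    refine AddSubgroup.subset_closure ⟨fun _ => w, ⟨v, hv⟩, ?_⟩
    rw [Fin.prod_univ_one]
  -- H is contained in E ⋉ M₀
  have hHK : H ≤ Kgrp E M₀ hM₀stab := by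
    rw [hH]
    refine (Subgroup.closure_le _).2 ?_
    rintro x (⟨m, ⟨v, hv, rfl⟩, rfl⟩ | ⟨m, ⟨v, hv, rfl⟩, rfl⟩)
    · refine ⟨?_, ?_⟩
      · show (SemidirectProduct.inr _ : bigGroup A).left.toAdd ∈ M₀
        rw [SemidirectProduct.left_inr, toAdd_one]
        exact zero_mem _
      · show (SemidirectProduct.inr _ : bigGroup A).right.toAdd ∈ E
        rw [SemidirectProduct.right_inr, toAdd_ofAdd]
        exact hv
    · refine ⟨?_, ?_⟩
      · show (SemidirectProduct.inl _ : bigGroup A).left.toAdd ∈ M₀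
        rw [SemidirectProduct.left_inl, toAdd_ofAdd]
        exact AddSubgroup.subset_closure ⟨v, hv, rfl⟩
      · show (SemidirectProduct.inl _ : bigGroup A).right.toAdd ∈ E
        rw [SemidirectProduct.right_inl, toAdd_one]
        exact zero_mem _
  -- the lower central series chain
  have chain : ∀ k : ℕ, (⊤ : Subgroup ↥H).lowerCentralSeries (k + 1)
      ≤ Subgroup.comap H.subtype (DWgrp (W (k + 1))) := by
    intro k
    induction k with
    | zero =>
      rw [lowerCentralSeries_succ, lowerCentralSeries_zero]
      refine Subgroup.commutator_le.2 fun x _ y _ => ?_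
      rw [Subgroup.mem_comap, map_commutatorElement, bigGroup_commutator]
      have hx := hHK x.2
      have hy := hHK y.2
      refine mem_DWgrp.2 ⟨SemidirectProduct.right_inl _, ?_⟩
      rw [SemidirectProduct.left_inl, toAdd_ofAdd]
      have e1 : ((H.subtype y : bigGroup A).left.toAdd).comp
            (X + C ((H.subtype x : bigGroup A).right.toAdd))
            - (H.subtype y : bigGroup A).left.toAdd
          = -(rhoE E (1 - gE E ⟨(H.subtype x : bigGroup A).right.toAdd, hx.2⟩)
              ((H.subtype y : bigGroup A).left.toAdd)) := by
        rw [rhoE_one_sub]; ring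
      have e2 : ((H.subtype x : bigGroup A).left.toAdd).comp
            (X + C ((H.subtype y : bigGroup A).right.toAdd))
            - (H.subtype x : bigGroup A).left.toAdd
          = -(rhoE E (1 - gE E ⟨(H.subtype y : bigGroup A).right.toAdd, hy.2⟩)
              ((H.subtype x : bigGroup A).left.toAdd)) := by
        rw [rhoE_one_sub]; ring
      rw [e1, e2]
      exact sub_mem (neg_mem (hW0 _ _ hy.1)) (neg_mem (hW0 _ _ hx.1))
    | succ k ih =>
      rw [lowerCentralSeries_succ]
      refine Subgroup.commutator_le.2 fun x hx y _ => ?_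
      have hx' := mem_DWgrp.1 (Subgroup.mem_comap.1 (ih hx))
      have hy := hHK y.2
      rw [Subgroup.mem_comap, map_commutatorElement, bigGroup_commutator]
      refine mem_DWgrp.2 ⟨SemidirectProduct.right_inl _, ?_⟩
      rw [SemidirectProduct.left_inl, toAdd_ofAdd]
      rw [hx'.1, toAdd_one, comp_XC0', sub_self, zero_sub]
      have e : ((H.subtype x : bigGroup A).left.toAdd).comp
            (X + C ((H.subtype y : bigGroup A).right.toAdd))
            - (H.subtype x : bigGroup A).left.toAdd
          = -(rhoE E (1 - gE E ⟨(H.subtype y : bigGroup A).right.toAdd, hy.2⟩)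
              ((H.subtype x : bigGroup A).left.toAdd)) := by
        rw [rhoE_one_sub]; ring
      rw [e, neg_neg]
      exact hWstep _ _ _ hx'.2
  -- the top of the chain vanishes
  have hWtop : W (r * (p - 1) + 1) = ⊥ := by
    rw [eq_bot_iff]
    refine (AddSubgroup.closure_le _).2 ?_
    rintro s ⟨u, v, rfl⟩
    rw [SetLike.mem_coe, AddSubgroup.mem_bot]
    rw [prod_one_sub_gE_eq_zero E b u, map_zero]
    rfl
  constructor
  · rw [Nat.add_comm 1 (r * (p - 1))]
    refine le_bot_iff.1 (le_trans (chain (r * (p - 1))) ?_)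
    rw [hWtop]
    intro x hx
    obtain ⟨h1, h2⟩ := mem_DWgrp.1 (Subgroup.mem_comap.1 hx)
    rw [AddSubgroup.mem_bot] at h2
    have hx1 : H.subtype x = 1 := by
      apply SemidirectProduct.ext
      · apply Multiplicative.toAdd.injective
        rw [h2, SemidirectProduct.one_left, toAdd_one]
      · rw [h1, SemidirectProduct.one_right]
    rw [Subgroup.mem_bot]
    exact Subgroup.subtype_injective H (by rw [hx1, map_one])
  · -- lower bound
    have hg₀H : SemidirectProduct.inl
        (Multiplicative.ofAdd (C a * (X + C ((0:A))) ^ (p ^ r - 1))) ∈ H := by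
      rw [hH]
      exact Subgroup.subset_closure (Or.inr ⟨_, ⟨(0:A), E.zero_mem, rfl⟩, rfl⟩)
    have hgen : ∀ e : E, SemidirectProduct.inr (Multiplicative.ofAdd ((e : A))) ∈ H := by
      intro e
      rw [hH]
      exact Subgroup.subset_closure (Or.inl ⟨_, ⟨(e : A), e.2, rfl⟩, rfl⟩)
    have lcs_elem : ∀ (k : ℕ) (u : Fin k → E) (f : Polynomial A),
        SemidirectProduct.inl (Multiplicative.ofAdd f) ∈ H →
        ∃ ξ ∈ (⊤ : Subgroup ↥H).lowerCentralSeries k, H.subtype ξ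
          = SemidirectProduct.inl
              (Multiplicative.ofAdd (rhoE E (∏ i, (1 - gE E (u i))) f)) := by
      intro k
      induction k with
      | zero =>
        intro u f hf
        refine ⟨⟨_, hf⟩, by rw [lowerCentralSeries_zero]; trivial, ?_⟩
        rw [show (∏ i : Fin 0, (1 - gE E (u i))) = 1 by simp]
        rw [map_one]
        rfl
      | succ k ih =>
        intro u f hf
        obtain ⟨ξ, hξ, hval⟩ := ih (Fin.tail u) f hf
        refine ⟨⁅ξ, ⟨_, hgen (u 0)⟩⁆, ?_, ?_⟩
        · rw [lowerCentralSeries_succ]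
          exact Subgroup.commutator_mem_commutator hξ (Subgroup.mem_top _)
        · rw [map_commutatorElement, hval, bigGroup_commutator]
          congr 1
          have hsub : ∀ (z : bigGroup A) (hz : z ∈ H), H.subtype ⟨z, hz⟩ = z := fun _ _ => rfl
          simp only [hsub]
          simp only [SemidirectProduct.left_inl, SemidirectProduct.right_inl,
            SemidirectProduct.left_inr, SemidirectProduct.right_inr, toAdd_ofAdd, toAdd_one]
          rw [zero_comp]
          rw [sub_self, zero_sub]
          rw [Fin.prod_univ_succ]
          rw [map_mul, Module.End.mul_apply, rhoE_one_sub]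
          refine congrArg Multiplicative.ofAdd ?_
          simp only [Fin.tail]
          ring
    obtain ⟨xi, hximem, hxival⟩ := lcs_elem (r * (p - 1))
      (fun i => b ((finProdFinEquiv.symm i).1)) _ hg₀H
    have hprodid : (∏ i : Fin (r * (p - 1)), (1 - gE E (b ((finProdFinEquiv.symm i).1))))
        = ∑ u : E, gE E u := by
      rw [← Equiv.prod_comp (finProdFinEquiv (m := r) (n := p - 1))
        (fun i => (1 - gE E (b ((finProdFinEquiv.symm i).1))))]
      simp only [Equiv.symm_apply_apply]
      rw [Fintype.prod_prod_type]
      have hconst : ∀ j : Fin r, (∏ _l : Fin (p - 1), (1 - gE E (b j)))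
          = (1 - gE E (b j)) ^ (p - 1) := by
        intro j
        rw [Finset.prod_const, Finset.card_univ, Fintype.card_fin]
      rw [Finset.prod_congr rfl fun j _ => hconst j]
      exact prod_identity E b
    rw [hprodid] at hxival
    have hval_ne : rhoE E (∑ u : E, gE E u) (C a * (X + C ((0:A))) ^ (p ^ r - 1)) ≠ 0 := by
      intro h0
      have hc := congrArg (fun f : Polynomial A => f.coeff 0) h0
      simp only [coeff_zero] at hc
      rw [map_sum, LinearMap.sum_apply] at hc
      have hterm : ∀ u : E, (rhoE E (gE E u)) (C a * (X + C ((0:A))) ^ (p ^ r - 1))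
          = C a * (X + C ((u : A))) ^ (p ^ r - 1) := by
        intro u
        rw [rhoE_gE, mul_comp, C_comp, pow_comp, add_comp, X_comp, C_comp]
        simp
      rw [Finset.sum_congr rfl fun u _ => hterm u] at hc
      rw [Polynomial.finset_sum_coeff] at hc
      have hterm2 : ∀ u : E, (C a * (X + C ((u : A))) ^ (p ^ r - 1)).coeff 0
          = a * ((u : A)) ^ (p ^ r - 1) := by
        intro u
        rw [coeff_zero_eq_eval_zero]
        simp
      rw [Finset.sum_congr rfl fun u _ => hterm2 u, ← Finset.mul_sum] at hc
      exact mul_ne_zero ha (sum_pow_card_sub_one_ne_zero E hr) hc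
    have hxine : xi ≠ 1 := by
      intro h1
      rw [h1, map_one] at hxival
      apply hval_ne
      rw [show (1 : bigGroup A) = SemidirectProduct.inl 1 from (map_one _).symm] at hxival
      have h2 := SemidirectProduct.inl_injective hxival
      have h3 := congrArg Multiplicative.toAdd h2
      rw [toAdd_one, toAdd_ofAdd] at h3
      exact h3.symm
    intro hbot
    rw [hbot] at hximem
    exact hxine (Subgroup.mem_bot.1 hximem)

end
end
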